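/- arXiv:2505.07390 — 6 statements merged into one kernel-verified Lean document; each statement's English description precedes it below -/
import Mathlib

section
/- (Proposition 1(iii), dissipative zone, non-effective dissipation.) Assume (A1): σ₀ admits an absolutely convergent Fourier expansion with A₁ < ∞; (A3) for η; and 0 < m < 1. Fix N ≥ 1. Then there exists a constant K_D > 0 such that for every ξ ∈ ℝ^d, every t ≥ 0 with (1+t)|ξ| ≤ N, and every real-valued C² solution v(·,ξ) of ∂ₜ²v + |ξ|²v + b(t)∂ₜv = 0 with v(0,ξ) = v₀(ξ), ∂ₜv(0,ξ) = v₁(ξ), one has ℰ(t,ξ) ≤ K_D (|ξ|²|v₀(ξ)|² + (1+t)^{−2m}|v₁(ξ)|²). -/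
/-!
Let `B` be a primitive of `b s = σ₀ (η s) / (1 + s)`. The function `σ₀ - m` has a bounded
primitive `G` (it is periodic with mean zero), and `b s - m / (1 + s) = (G ∘ η)' s * g s` with the
nonincreasing weight `g s = ((1 + s) η' s)⁻¹`; integrating by parts gives
`B s - B 0 = m log (1 + s) + O(1)`, i.e. `exp (B s - B 0) ≍ (1 + s) ^ m`.

For `t` in the dissipative zone take `w s = (1 + t) ^ (-m) exp (B s - B 0)`, so that `w' = b w`,
`w ≲ 1` and `w⁻¹ ≲ ((1 + t) / (1 + s)) ^ m` on `[0, t]`. The weighted energy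
`E = r² v² + (w v')²` satisfies `E' = 2 r² v v' (1 - w²) ≤ r (w + w⁻¹) E`, and
`∫₀ᵗ r (w + w⁻¹) ≲ r (1 + t) / (1 - m) ≤ N / (1 - m)`, so by Gronwall `E t ≲ E 0`, where
`E 0 = r² v₀² + (1 + t) ^ (-2m) v₁²`; since `w t ≳ 1`, `E t` controls the energy at time `t`.
-/

open Set Real

theorem Function.Periodic.exists_abs_primitive_le {f : ℝ → ℝ} {p : ℝ} (hf : Periodic f p)
    (hp : p ≠ 0) (hcont : Continuous f) (hmean : ∫ x in (0 : ℝ)..p, f x = 0) :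
    ∃ M, ∀ u, |∫ x in (0 : ℝ)..u, f x| ≤ M := by
  have hint : ∀ a b, IntervalIntegrable f MeasureTheory.volume a b :=
    fun _ _ ↦ hcont.intervalIntegrable _ _
  have hper : Periodic (fun u ↦ ∫ x in (0 : ℝ)..u, f x) p := fun u ↦ by
    simp only [hf.intervalIntegral_add_eq_add 0 u hint, zero_add, hmean, add_zero]
  obtain ⟨M, hM⟩ := (hper.isBounded_of_continuous hp
    (intervalIntegral.continuous_primitive hint 0)).exists_norm_le
  exact ⟨M, fun u ↦ hM _ (mem_range_self u)⟩

theorem exists_abs_primitive_sub_mean_le {f : ℝ → ℝ} {T m : ℝ} (hT : 0 < T)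
    (hf : Function.Periodic f (2 * T)) (hcont : Continuous f)
    (hmean : m = 1 / (2 * T) * ∫ s in (-T)..T, f s) :
    ∃ M, ∀ u, |∫ x in (0 : ℝ)..u, (f x - m)| ≤ M := by
  have hper : Function.Periodic (fun x ↦ f x - m) (2 * T) := fun x ↦ by simp only [hf x]
  refine hper.exists_abs_primitive_le (by positivity) (by fun_prop) ?_
  rw [← zero_add (2 * T), hper.intervalIntegral_add_eq 0 (-T), show -T + 2 * T = T by ring,
    intervalIntegral.integral_sub (hcont.intervalIntegrable _ _) intervalIntegrable_const,
    intervalIntegral.integral_const, hmean, smul_eq_mul]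
  field_simp
  ring

theorem ContinuousOn.exists_hasDerivAt_Ici {E : Type*} [NormedAddCommGroup E] [NormedSpace ℝ E]
    [CompleteSpace E] {f : ℝ → E} {a : ℝ} (hf : ContinuousOn f (Ici a)) :
    ∃ F : ℝ → E, ∀ x, a ≤ x → HasDerivAt F (f x) x := by
  have hext : Continuous fun x ↦ f (max x a) :=
    hf.comp_continuous (continuous_id.max continuous_const) fun x ↦ le_max_right x a
  refine ⟨fun x ↦ ∫ u in a..x, f (max u a), fun x hx ↦ ?_⟩
  simpa [max_eq_left hx] using (hext.integral_hasStrictDerivAt a x).hasDerivAt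

theorem abs_sub_le_of_hasDerivAt_mul_antitone {F φ φ' g g' : ℝ → ℝ} {M a b : ℝ} (hab : a ≤ b)
    (hF : ∀ s ∈ Icc a b, HasDerivAt F (φ' s * g s) s)
    (hφ : ∀ s ∈ Icc a b, HasDerivAt φ (φ' s) s) (hφM : ∀ s ∈ Icc a b, |φ s| ≤ M)
    (hg : ∀ s ∈ Icc a b, HasDerivAt g (g' s) s) (hg' : ∀ s ∈ Icc a b, g' s ≤ 0)
    (hgb : 0 ≤ g b) : |F b - F a| ≤ 2 * M * g a := by
  have ha : a ∈ Icc a b := left_mem_Icc.2 hab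
  have hb : b ∈ Icc a b := right_mem_Icc.2 hab
  -- integrating by parts, `F - φ g` has derivative `-φ g'`, which is dominated by `-M g'`
  have hH : ∀ s ∈ Icc a b,
      HasDerivAt (fun s ↦ F s - φ s * g s) (-(φ s * g' s)) s := fun s hs ↦
    ((hF s hs).sub ((hφ s hs).mul (hg s hs))).congr_deriv (by ring)
  have hgM : ∀ s ∈ Icc a b, HasDerivAt (fun s ↦ M * (g a - g s)) (-(M * g' s)) s := fun s hs ↦
    (((hg s hs).const_sub (g a)).const_mul M).congr_deriv (by ring)
  have hHb : |(F b - φ b * g b) - (F a - φ a * g a)| ≤ M * (g a - g b) := by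
    refine image_norm_le_of_norm_deriv_right_le_deriv_boundary'
      (f := fun s ↦ (F s - φ s * g s) - (F a - φ a * g a))
      (fun s hs ↦ ((hH s hs).sub_const _).continuousAt.continuousWithinAt)
      (fun s hs ↦ ((hH s (Ico_subset_Icc_self hs)).sub_const _).hasDerivWithinAt)
      (by simp) (fun s hs ↦ (hgM s hs).continuousAt.continuousWithinAt)
      (fun s hs ↦ (hgM s (Ico_subset_Icc_self hs)).hasDerivWithinAt) (fun s hs ↦ ?_) hb
    have hs := Ico_subset_Icc_self hs
    rw [Real.norm_eq_abs, abs_neg, abs_mul, abs_of_nonpos (hg' s hs)]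
    nlinarith [hφM s hs, hg' s hs]
  have hgab : g b ≤ g a :=
    antitoneOn_of_hasDerivWithinAt_nonpos (convex_Icc a b)
      (fun s hs ↦ (hg s hs).continuousAt.continuousWithinAt)
      (fun s hs ↦ (hg s (interior_subset hs)).hasDerivWithinAt)
      (fun s hs ↦ hg' s (interior_subset hs)) ha hb hab
  have hφa : |φ a * g a| ≤ M * g a := by
    rw [abs_mul, abs_of_nonneg (hgb.trans hgab)]
    exact mul_le_mul_of_nonneg_right (hφM a ha) (hgb.trans hgab)
  have hφb : |φ b * g b| ≤ M * g b := by
    rw [abs_mul, abs_of_nonneg hgb]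
    exact mul_le_mul_of_nonneg_right (hφM b hb) hgb
  calc |F b - F a|
      = |((F b - φ b * g b) - (F a - φ a * g a)) + φ b * g b - φ a * g a| := by ring_nf
    _ ≤ M * (g a - g b) + M * g b + M * g a := by
      linarith [abs_sub (((F b - φ b * g b) - (F a - φ a * g a)) + φ b * g b) (φ a * g a),
        abs_add_le ((F b - φ b * g b) - (F a - φ a * g a)) (φ b * g b)]
    _ = 2 * M * g a := by ring

theorem abs_primitive_sub_mul_log_le {σ₀ G η η' η'' B : ℝ → ℝ} {m M : ℝ}
    (hG : ∀ y, HasDerivAt G (σ₀ y - m) y) (hGM : ∀ y, |G y| ≤ M)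
    (hηd : ∀ t, 0 ≤ t → HasDerivAt η (η' t) t) (hηd' : ∀ t, 0 ≤ t → HasDerivAt η' (η'' t) t)
    (hη'pos : ∀ t, 0 ≤ t → 0 < η' t) (hη''nonneg : ∀ t, 0 ≤ t → 0 ≤ η'' t)
    (hB : ∀ t, 0 ≤ t → HasDerivAt B (σ₀ (η t) / (1 + t)) t) {t : ℝ} (ht : 0 ≤ t) :
    |B t - B 0 - m * log (1 + t)| ≤ 2 * M / η' 0 := by
  have hpos : ∀ s ∈ Icc 0 t, 0 < 1 + s ∧ 0 < η' s := fun s hs ↦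
    ⟨by linarith [hs.1], hη'pos s hs.1⟩
  have hlog : ∀ s ∈ Icc 0 t, HasDerivAt (fun s ↦ log (1 + s)) (1 / (1 + s)) s := fun s hs ↦ by
    simpa using ((hasDerivAt_id s).const_add 1).log (hpos s hs).1.ne'
  have key := abs_sub_le_of_hasDerivAt_mul_antitone (M := M) ht
    (F := fun s ↦ B s - m * log (1 + s)) (φ := fun s ↦ G (η s))
    (φ' := fun s ↦ (σ₀ (η s) - m) * η' s) (g := fun s ↦ ((1 + s) * η' s)⁻¹)
    (g' := fun s ↦ -(η' s + (1 + s) * η'' s) / ((1 + s) * η' s) ^ 2)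
    (fun s hs ↦ ((hB s hs.1).sub ((hlog s hs).const_mul m)).congr_deriv (by
      obtain ⟨h1, h2⟩ := hpos s hs
      field_simp))
    (fun s hs ↦ (hG (η s)).comp s (hηd s hs.1)) (fun s _ ↦ hGM (η s))
    (fun s hs ↦ ((((hasDerivAt_id s).const_add 1).mul (hηd' s hs.1)).inv
      (mul_pos (hpos s hs).1 (hpos s hs).2).ne').congr_deriv (by simp))
    (fun s hs ↦ div_nonpos_of_nonpos_of_nonneg
      (by nlinarith [hpos s hs, hη''nonneg s hs.1]) (sq_nonneg _))
    (inv_nonneg.2 (mul_pos (hpos t ⟨ht, le_rfl⟩).1 (hpos t ⟨ht, le_rfl⟩).2).le)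
  simpa [div_eq_mul_inv, sub_right_comm] using key

theorem exp_le_exp_mul_rpow_of_abs_sub_mul_log_le {β m C x : ℝ} (hx : 0 < x)
    (h : |β - m * log x| ≤ C) : exp β ≤ exp C * x ^ m := by
  rw [rpow_def_of_pos hx, ← exp_add, exp_le_exp]
  linarith [(abs_le.1 h).2]

theorem rpow_neg_mul_exp_le_and_inv_le {β m C s t : ℝ} (hm : 0 ≤ m) (hs : 0 ≤ s) (hst : s ≤ t)
    (h : |β - m * log (1 + s)| ≤ C) :
    (1 + t) ^ (-m) * exp β ≤ exp C ∧
      ((1 + t) ^ (-m) * exp β)⁻¹ ≤ exp C * (1 + t) ^ m * (1 + s) ^ (-m) := by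
  have h1s : 0 < 1 + s := by linarith
  have h1t : 0 < 1 + t := by linarith
  constructor
  · calc (1 + t) ^ (-m) * exp β ≤ (1 + t) ^ (-m) * (exp C * (1 + s) ^ m) := by
          gcongr; exact exp_le_exp_mul_rpow_of_abs_sub_mul_log_le h1s h
      _ ≤ (1 + t) ^ (-m) * (exp C * (1 + t) ^ m) := by gcongr
      _ = exp C := by rw [mul_left_comm, ← rpow_add h1t, neg_add_cancel, rpow_zero, mul_one]
  · have h' : |-β - -m * log (1 + s)| ≤ C := by
      rwa [show -β - -m * log (1 + s) = -(β - m * log (1 + s)) by ring, abs_neg]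
    calc ((1 + t) ^ (-m) * exp β)⁻¹ = (1 + t) ^ m * exp (-β) := by
          rw [mul_inv, ← rpow_neg h1t.le, neg_neg, ← exp_neg]
      _ ≤ (1 + t) ^ m * (exp C * (1 + s) ^ (-m)) := by
          gcongr; exact exp_le_exp_mul_rpow_of_abs_sub_mul_log_le h1s h'
      _ = exp C * (1 + t) ^ m * (1 + s) ^ (-m) := by ring

theorem le_mul_exp_sub_of_hasDerivAt_le_mul {E E' K K' : ℝ → ℝ} {a b : ℝ} (hab : a ≤ b)
    (hE : ∀ s ∈ Icc a b, HasDerivAt E (E' s) s) (hK : ∀ s ∈ Icc a b, HasDerivAt K (K' s) s)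
    (hle : ∀ s ∈ Icc a b, E' s ≤ K' s * E s) : E b ≤ E a * exp (K b - K a) := by
  have hd : ∀ s ∈ Icc a b, HasDerivAt (fun s ↦ E s * exp (-K s))
      ((E' s - K' s * E s) * exp (-K s)) s := fun s hs ↦
    ((hE s hs).mul (hK s hs).neg.exp).congr_deriv (by simp only [Pi.neg_apply]; ring)
  have hanti : AntitoneOn (fun s ↦ E s * exp (-K s)) (Icc a b) :=
    antitoneOn_of_hasDerivWithinAt_nonpos (convex_Icc a b)
      (fun s hs ↦ (hd s hs).continuousAt.continuousWithinAt)
      (fun s hs ↦ (hd s (interior_subset hs)).hasDerivWithinAt)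
      (fun s hs ↦ mul_nonpos_of_nonpos_of_nonneg
        (sub_nonpos.2 (hle s (interior_subset hs))) (exp_pos _).le)
  have := hanti (left_mem_Icc.2 hab) (right_mem_Icc.2 hab) hab
  calc E b = E b * exp (-K b) * exp (K b) := by rw [mul_assoc, ← exp_add]; simp
    _ ≤ E a * exp (-K a) * exp (K b) := by gcongr
    _ = E a * exp (K b - K a) := by rw [mul_assoc, ← exp_add]; ring_nf

theorem two_mul_sq_mul_mul_one_sub_sq_le {r w x y : ℝ} (hr : 0 ≤ r) (hw : 0 < w) :
    2 * r ^ 2 * x * y * (1 - w ^ 2) ≤ r * (w + w⁻¹) * (r ^ 2 * x ^ 2 + (w * y) ^ 2) := by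
  have h : r * (w + w⁻¹) * (r ^ 2 * x ^ 2 + (w * y) ^ 2) - 2 * r ^ 2 * x * y * (1 - w ^ 2)
      = r * (w * (r * x + w * y) ^ 2 + w⁻¹ * (r * x - w * y) ^ 2) := by
    field_simp
    ring
  have : 0 ≤ r * (w * (r * x + w * y) ^ 2 + w⁻¹ * (r * x - w * y) ^ 2) := by positivity
  linarith

theorem hasDerivAt_one_add_rpow_div {μ s : ℝ} (hs : 0 < 1 + s) (hμ : μ ≠ 1) :
    HasDerivAt (fun x ↦ (1 + x) ^ (1 - μ) / (1 - μ)) ((1 + s) ^ (-μ)) s := by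
  have h := (((hasDerivAt_id' s).const_add 1).rpow_const (p := 1 - μ) (Or.inl hs.ne')).div_const
    (1 - μ)
  refine h.congr_deriv ?_
  rw [show 1 - μ - 1 = -μ by ring]
  field_simp [sub_ne_zero.2 hμ.symm]

theorem weighted_energy_le_mul_exp {b w v v' v'' : ℝ → ℝ} {r c m t : ℝ} (hr : 0 ≤ r)
    (hm1 : m < 1) (ht : 0 ≤ t)
    (hv : ∀ s ∈ Icc 0 t, HasDerivAt v (v' s) s) (hv' : ∀ s ∈ Icc 0 t, HasDerivAt v' (v'' s) s)
    (hODE : ∀ s ∈ Icc 0 t, v'' s + r ^ 2 * v s + b s * v' s = 0)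
    (hw : ∀ s ∈ Icc 0 t, HasDerivAt w (b s * w s) s) (hwpos : ∀ s ∈ Icc 0 t, 0 < w s)
    (hw_le : ∀ s ∈ Icc 0 t, w s ≤ c)
    (hw_inv_le : ∀ s ∈ Icc 0 t, (w s)⁻¹ ≤ c * (1 + t) ^ m * (1 + s) ^ (-m)) :
    r ^ 2 * v t ^ 2 + (w t * v' t) ^ 2
      ≤ (r ^ 2 * v 0 ^ 2 + (w 0 * v' 0) ^ 2) * exp (r * c * (1 + t) * (1 + (1 - m)⁻¹)) := by
  have hL : 0 < 1 + t := by linarith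
  have hE : ∀ s ∈ Icc 0 t, HasDerivAt (fun s ↦ r ^ 2 * v s ^ 2 + (w s * v' s) ^ 2)
      (2 * r ^ 2 * v s * v' s * (1 - w s ^ 2)) s := fun s hs ↦
    ((((hv s hs).pow 2).const_mul _).add (((hw s hs).mul (hv' s hs)).pow 2)).congr_deriv
      (by simp only [Pi.mul_apply]; linear_combination 2 * w s ^ 2 * v' s * hODE s hs)
  have hK : ∀ s ∈ Icc 0 t, HasDerivAt
      (fun s ↦ r * c * (s + (1 + t) ^ m * ((1 + s) ^ (1 - m) / (1 - m))))
      (r * c * (1 + (1 + t) ^ m * (1 + s) ^ (-m))) s := fun s hs ↦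
    (((hasDerivAt_id' s).add ((hasDerivAt_one_add_rpow_div (by linarith [hs.1])
      hm1.ne).const_mul _)).const_mul _)
  have hle : ∀ s ∈ Icc 0 t, 2 * r ^ 2 * v s * v' s * (1 - w s ^ 2)
      ≤ r * c * (1 + (1 + t) ^ m * (1 + s) ^ (-m)) * (r ^ 2 * v s ^ 2 + (w s * v' s) ^ 2) :=
    fun s hs ↦ (two_mul_sq_mul_mul_one_sub_sq_le hr (hwpos s hs)).trans
      (mul_le_mul_of_nonneg_right (by nlinarith [hw_le s hs, hw_inv_le s hs]) (by positivity))
  refine (le_mul_exp_sub_of_hasDerivAt_le_mul ht hE hK hle).trans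
    (mul_le_mul_of_nonneg_left (exp_le_exp.2 ?_) (by positivity))
  have hLL : (1 + t) ^ m * (1 + t) ^ (1 - m) = 1 + t := by
    rw [← rpow_add hL]; simp
  have hc : 0 ≤ c := (hwpos 0 ⟨le_rfl, ht⟩).le.trans (hw_le 0 ⟨le_rfl, ht⟩)
  have h1m : 0 < (1 - m)⁻¹ := inv_pos.2 (by linarith)
  simp only [add_zero, one_rpow, div_eq_mul_inv, ← mul_assoc, hLL]
  nlinarith [mul_nonneg (mul_nonneg hr hc) (mul_nonneg (rpow_nonneg hL.le m) h1m.le)]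

theorem energy_le_of_abs_sub_mul_log_le {b B v v' v'' : ℝ → ℝ} {r m C N t : ℝ} (hr : 0 ≤ r)
    (hm0 : 0 ≤ m) (hm1 : m < 1)
    (hB : ∀ s, 0 ≤ s → HasDerivAt B (b s) s)
    (hBlog : ∀ s, 0 ≤ s → |B s - B 0 - m * log (1 + s)| ≤ C)
    (hv : ∀ s, 0 ≤ s → HasDerivAt v (v' s) s) (hv' : ∀ s, 0 ≤ s → HasDerivAt v' (v'' s) s)
    (hODE : ∀ s, 0 ≤ s → v'' s + r ^ 2 * v s + b s * v' s = 0)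
    (ht : 0 ≤ t) (hzone : (1 + t) * r ≤ N) :
    r ^ 2 * v t ^ 2 + v' t ^ 2 ≤ exp C ^ 2 * exp (N * exp C * (1 + (1 - m)⁻¹))
      * (r ^ 2 * v 0 ^ 2 + (1 + t) ^ (-(2 * m)) * v' 0 ^ 2) := by
  have hL : 0 < 1 + t := by linarith
  have hc : 1 ≤ exp C := one_le_exp (by simpa using hBlog 0 le_rfl)
  set w : ℝ → ℝ := fun s ↦ (1 + t) ^ (-m) * exp (B s - B 0)
  have hw : ∀ s ∈ Icc 0 t, HasDerivAt w (b s * w s) s := fun s hs ↦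
    (((hB s hs.1).sub_const (B 0)).exp.const_mul _).congr_deriv (by ring)
  have hw_bounds := fun s (hs : s ∈ Icc 0 t) ↦
    rpow_neg_mul_exp_le_and_inv_le hm0 hs.1 hs.2 (hBlog s hs.1)
  have hwt : 1 ≤ exp C * w t := by
    have h := (hw_bounds t ⟨ht, le_rfl⟩).2
    rw [mul_assoc, ← rpow_add hL, add_neg_cancel, rpow_zero, mul_one,
      inv_le_iff_one_le_mul₀ (by positivity)] at h
    linarith
  have hw0 : (w 0 * v' 0) ^ 2 = (1 + t) ^ (-(2 * m)) * v' 0 ^ 2 := by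
    show ((1 + t) ^ (-m) * exp (B 0 - B 0) * v' 0) ^ 2 = _
    rw [sub_self, exp_zero, mul_one, mul_pow, ← rpow_natCast, ← rpow_mul hL.le]
    ring_nf
  have key := weighted_energy_le_mul_exp hr hm1 ht (fun s hs ↦ hv s hs.1) (fun s hs ↦ hv' s hs.1)
    (fun s hs ↦ hODE s hs.1) hw (fun s _ ↦ by positivity) (fun s hs ↦ (hw_bounds s hs).1)
    (fun s hs ↦ (hw_bounds s hs).2)
  have hexp : r * exp C * (1 + t) * (1 + (1 - m)⁻¹) ≤ N * exp C * (1 + (1 - m)⁻¹) := by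
    have : 0 ≤ exp C * (1 + (1 - m)⁻¹) := by have := inv_pos.2 (sub_pos.2 hm1); positivity
    nlinarith
  calc r ^ 2 * v t ^ 2 + v' t ^ 2 ≤ exp C ^ 2 * (r ^ 2 * v t ^ 2 + (w t * v' t) ^ 2) := by
        nlinarith [mul_le_mul_of_nonneg_right (one_le_pow₀ (n := 2) hc)
          (mul_nonneg (sq_nonneg r) (sq_nonneg (v t))),
          mul_le_mul_of_nonneg_right (one_le_pow₀ (n := 2) hwt) (sq_nonneg (v' t))]
    _ ≤ exp C ^ 2 * ((r ^ 2 * v 0 ^ 2 + (w 0 * v' 0) ^ 2)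
          * exp (N * exp C * (1 + (1 - m)⁻¹))) := by
        gcongr
        exact key.trans (by gcongr)
    _ = _ := by rw [hw0]; ring

theorem energy_estimate_dissipative_zone_noneffective_general
    (d : ℕ) (T m : ℝ) (hT : 0 < T) (hm0 : 0 < m) (hm1 : m < 1)
    (σ₀ : ℝ → ℝ)
    (hσ₀cont : Continuous σ₀)
    (hσ₀per : Function.Periodic σ₀ (2 * T))
    (hmean : m = 1 / (2 * T) * ∫ s in (-T)..T, σ₀ s)
    (η η' η'' : ℝ → ℝ)
    (hηd : ∀ t, 0 ≤ t → HasDerivAt η (η' t) t)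
    (hηd' : ∀ t, 0 ≤ t → HasDerivAt η' (η'' t) t)
    (hη'pos : ∀ t, 0 ≤ t → 0 < η' t)
    (hη''pos : ∀ t, 0 ≤ t → 0 < η'' t)
    (N : ℝ) :
    ∃ K_D : ℝ, 0 < K_D ∧
      ∀ ξ : EuclideanSpace ℝ (Fin d),
      ∀ v v' v'' : ℝ → ℝ,
        (∀ t, 0 ≤ t → HasDerivAt v (v' t) t) →
        (∀ t, 0 ≤ t → HasDerivAt v' (v'' t) t) →
        (∀ t, 0 ≤ t → v'' t + ‖ξ‖ ^ 2 * v t + σ₀ (η t) / (1 + t) * v' t = 0) →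
        ∀ t, 0 ≤ t → (1 + t) * ‖ξ‖ ≤ N →
          ‖ξ‖ ^ 2 * v t ^ 2 + v' t ^ 2
            ≤ K_D * (‖ξ‖ ^ 2 * v 0 ^ 2 + (1 + t) ^ (-(2 * m)) * v' 0 ^ 2) := by
  obtain ⟨M, hM⟩ := exists_abs_primitive_sub_mean_le hT hσ₀per hσ₀cont hmean
  have hG : ∀ y, HasDerivAt (fun u ↦ ∫ x in (0 : ℝ)..u, (σ₀ x - m)) (σ₀ y - m) y := fun y ↦
    ((hσ₀cont.sub continuous_const).integral_hasStrictDerivAt 0 y).hasDerivAt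
  have hηc : ContinuousOn η (Ici 0) := fun s hs ↦ (hηd s hs).continuousAt.continuousWithinAt
  have hb : ContinuousOn (fun s ↦ σ₀ (η s) / (1 + s)) (Ici 0) :=
    (hσ₀cont.comp_continuousOn hηc).div (by fun_prop) fun s (hs : 0 ≤ s) ↦ by positivity
  obtain ⟨B, hB⟩ := hb.exists_hasDerivAt_Ici
  have hBlog := fun s (hs : 0 ≤ s) ↦ abs_primitive_sub_mul_log_le hG hM hηd hηd' hη'pos
    (fun s hs ↦ (hη''pos s hs).le) hB hs
  refine ⟨exp (2 * M / η' 0) ^ 2 * exp (N * exp (2 * M / η' 0) * (1 + (1 - m)⁻¹)),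
    by positivity, fun ξ v v' v'' hv hv' hODE t ht hzone ↦ ?_⟩
  exact energy_le_of_abs_sub_mul_log_le (norm_nonneg ξ) hm0.le hm1 hB hBlog hv hv' hODE ht hzone

/-- Proposition 1(iii), dissipative zone, non-effective dissipation. -/
theorem energy_estimate_dissipative_zone_noneffective
    (d : ℕ) (T m A₁ : ℝ) (hT : 0 < T) (hm0 : 0 < m) (hm1 : m < 1)
    (α β : ℕ → ℝ) (σ₀ : ℝ → ℝ)
    (hσ₀cont : Continuous σ₀)
    (hσ₀per : Function.Periodic σ₀ (2 * T))
    (hsum : Summable fun n : ℕ => |α (n + 1)| + |β (n + 1)|)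
    (hA₁ : A₁ = ∑' n : ℕ, (|α (n + 1)| + |β (n + 1)|))
    (hmean : m = 1 / (2 * T) * ∫ s in (-T)..T, σ₀ s)
    (hFourier : ∀ x : ℝ, σ₀ x = m + ∑' n : ℕ,
      (α (n + 1) * Real.cos (((n : ℝ) + 1) * Real.pi * x / T)
        + β (n + 1) * Real.sin (((n : ℝ) + 1) * Real.pi * x / T)))
    (η η' η'' : ℝ → ℝ)
    (hη0 : 0 ≤ η 0)
    (hηd : ∀ t, 0 ≤ t → HasDerivAt η (η' t) t)
    (hηd' : ∀ t, 0 ≤ t → HasDerivAt η' (η'' t) t)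
    (hη''cont : ContinuousOn η'' (Ici 0))
    (hη'pos : ∀ t, 0 ≤ t → 0 < η' t)
    (hη''pos : ∀ t, 0 ≤ t → 0 < η'' t)
    (N : ℝ) (hN : 1 ≤ N) :
    ∃ K_D : ℝ, 0 < K_D ∧
      ∀ ξ : EuclideanSpace ℝ (Fin d),
      ∀ v v' v'' : ℝ → ℝ,
        (∀ t, 0 ≤ t → HasDerivAt v (v' t) t) →
        (∀ t, 0 ≤ t → HasDerivAt v' (v'' t) t) →
        (∀ t, 0 ≤ t → v'' t + ‖ξ‖ ^ 2 * v t + σ₀ (η t) / (1 + t) * v' t = 0) →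
        ∀ t, 0 ≤ t → (1 + t) * ‖ξ‖ ≤ N →
          ‖ξ‖ ^ 2 * v t ^ 2 + v' t ^ 2
            ≤ K_D * (‖ξ‖ ^ 2 * v 0 ^ 2 + (1 + t) ^ (-(2 * m)) * v' 0 ^ 2) :=
  energy_estimate_dissipative_zone_noneffective_general d T m hT hm0 hm1 σ₀ hσ₀cont hσ₀per hmean η
    η' η'' hηd hηd' hη'pos hη''pos N
end

section
/- (Oscillatory integral lemma.) Let t₀ ≥ 0, n ≥ 1 a natural number, and [τ₋, τ₊] ⊂ [t₀, ∞). Suppose φ ∈ C²([τ₋,τ₊]) and ψ ∈ C¹([τ₋,τ₊]) satisfy |φ′(t)| ≥ φ₀ > 0, φ″(t) ≥ 0, and |ψ′(t)| ≤ Ψ₀/(1+t) on [τ₋,τ₊], where φ₀ and Ψ₀ are positive real numbers. Then for each choice of f, g ∈ {cos, sin}: |∫_{τ₋}^{τ₊} f(n φ(s)) g(ψ(s)) / (1+s) ds| ≤ (Ψ₀ + 4)/(n φ₀ (1+t₀)). -/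
/-!
Write `f (n φ) = (F (n φ))' / (n φ')`, where `F` (`sin` or `-cos`) is a primitive of `f` bounded
by `1`, and integrate by parts against `u = g (ψ) / ((1 + s) n φ')`. Each boundary term is at most
`1 / (n φ₀ (1 + t₀))`. In `u'`, the part coming from `(g (ψ s) / (1 + s))'` is at most
`(Ψ₀ + 1) / (n φ₀ (1 + s)²)`, whose integral is at most `(Ψ₀ + 1) / (n φ₀ (1 + t₀))`. The other
part carries the factor `φ'' / φ'² = -(1 / φ')'`, which is nonnegative by convexity, so its integral
is `1 / φ'(τ₋) - 1 / φ'(τ₊)`; as `φ'` is continuous and never vanishes it keeps one sign, and this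
difference is at most `1 / φ₀`.
-/

open Set intervalIntegral MeasureTheory

theorem abs_integral_mul_deriv_le {a b : ℝ} (hab : a ≤ b) {u u' v v' : ℝ → ℝ}
    (hu : ∀ x ∈ Icc a b, HasDerivAt u (u' x) x) (hv : ∀ x ∈ Icc a b, HasDerivAt v (v' x) x)
    (hu' : IntervalIntegrable u' volume a b) (hv' : IntervalIntegrable v' volume a b)
    (hv_bd : ∀ x ∈ Icc a b, |v x| ≤ 1) :
    |∫ x in a..b, u x * v' x| ≤ |u a| + |u b| + ∫ x in a..b, |u' x| := by
  rw [← uIcc_of_le hab] at hu hv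
  rw [integral_mul_deriv_eq_deriv_mul hu hv hu' hv']
  have hend : ∀ x ∈ Icc a b, |u x * v x| ≤ |u x| := fun x hx => by
    rw [abs_mul]
    exact mul_le_of_le_one_right (abs_nonneg _) (hv_bd x hx)
  have hbulk : |∫ x in a..b, u' x * v x| ≤ ∫ x in a..b, |u' x| :=
    norm_integral_le_of_norm_le hab (ae_of_all _ fun x hx => by
      rw [Real.norm_eq_abs, abs_mul]
      exact mul_le_of_le_one_right (abs_nonneg _) (hv_bd x (Ioc_subset_Icc_self hx))) hu'.abs
  calc |u b * v b - u a * v a - ∫ x in a..b, u' x * v x|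
      ≤ |u b * v b| + |u a * v a| + |∫ x in a..b, u' x * v x| :=
        (abs_sub _ _).trans (add_le_add_left (abs_sub _ _) _)
    _ ≤ |u a| + |u b| + ∫ x in a..b, |u' x| := by
        linarith [hend a (left_mem_Icc.2 hab), hend b (right_mem_Icc.2 hab)]

theorem mul_pos_of_continuousOn_of_ne_zero {f : ℝ → ℝ} {a b : ℝ} (hf : ContinuousOn f (uIcc a b))
    (hf0 : ∀ x ∈ uIcc a b, f x ≠ 0) : 0 < f a * f b := by
  by_contra! h
  have h0 : (0 : ℝ) ∈ uIcc (f a) (f b) := mem_uIcc.2 <| by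
    rcases mul_nonpos_iff.1 h with h | h
    exacts [Or.inr h.symm, Or.inl h]
  obtain ⟨x, hx, hfx⟩ := intermediate_value_uIcc hf h0
  exact hf0 x hx hfx

theorem abs_inv_sub_inv_le_of_mul_pos {x y c : ℝ} (hc : 0 < c) (hxy : 0 < x * y)
    (hx : c ≤ |x|) (hy : c ≤ |y|) : |x⁻¹ - y⁻¹| ≤ c⁻¹ := by
  have hx' := abs_le.1 ((abs_inv x).trans_le (inv_anti₀ hc hx))
  have hy' := abs_le.1 ((abs_inv y).trans_le (inv_anti₀ hc hy))
  rw [abs_sub_le_iff]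
  rcases pos_and_pos_or_neg_and_neg_of_mul_pos hxy with ⟨hx0, hy0⟩ | ⟨hx0, hy0⟩
  · have := inv_pos.2 hx0
    have := inv_pos.2 hy0
    constructor <;> linarith
  · have := inv_lt_zero.2 hx0
    have := inv_lt_zero.2 hy0
    constructor <;> linarith

theorem abs_integral_deriv_div_sq_le {a b c : ℝ} (hab : a ≤ b) (hc : 0 < c) {u u' : ℝ → ℝ}
    (hu : ∀ t ∈ Icc a b, HasDerivAt u (u' t) t) (hu' : ContinuousOn u' (Icc a b))
    (hlb : ∀ t ∈ Icc a b, c ≤ |u t|) :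
    |∫ t in a..b, u' t / u t ^ 2| ≤ c⁻¹ := by
  have hne : ∀ t ∈ Icc a b, u t ≠ 0 := fun t ht => abs_pos.1 (hc.trans_le (hlb t ht))
  have huc : ContinuousOn u (Icc a b) := HasDerivAt.continuousOn hu
  rw [← uIcc_of_le hab] at hne huc hu hu'
  have hFTC : ∫ t in a..b, u' t / u t ^ 2 = -(u b)⁻¹ - -(u a)⁻¹ := by
    have hint : IntervalIntegrable (fun t => u' t / u t ^ 2) volume a b :=
      (hu'.div (huc.pow 2) fun t ht => pow_ne_zero 2 (hne t ht)).intervalIntegrable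
    refine integral_eq_sub_of_hasDerivAt (f := fun t => -(u t)⁻¹) (fun t ht => ?_) hint
    exact ((hu t ht).inv (hne t ht)).neg.congr_deriv (by rw [neg_div, neg_neg])
  rw [hFTC, neg_sub_neg]
  exact abs_inv_sub_inv_le_of_mul_pos hc (mul_pos_of_continuousOn_of_ne_zero huc hne)
    (hlb a (left_mem_Icc.2 hab)) (hlb b (right_mem_Icc.2 hab))

theorem integral_inv_one_add_sq_le {a b : ℝ} (ha : 0 < 1 + a) (hab : a ≤ b) :
    ∫ s in a..b, ((1 + s) ^ 2)⁻¹ ≤ (1 + a)⁻¹ := by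
  have hpos : ∀ s ∈ uIcc a b, 0 < 1 + s := fun s hs => by
    rw [uIcc_of_le hab] at hs; linarith [hs.1]
  have hFTC : ∫ s in a..b, ((1 + s) ^ 2)⁻¹ = -(1 + b)⁻¹ - -(1 + a)⁻¹ := by
    have hint : IntervalIntegrable (fun s : ℝ => ((1 + s) ^ 2)⁻¹) volume a b :=
      (((continuousOn_const.add continuousOn_id).pow 2).inv₀
        fun s hs => (pow_pos (hpos s hs) 2).ne').intervalIntegrable
    refine integral_eq_sub_of_hasDerivAt (f := fun s => -(1 + s)⁻¹) (fun s hs => ?_) hint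
    exact (((hasDerivAt_id' s).const_add 1).inv (hpos s hs).ne').neg.congr_deriv
      (by rw [neg_div, neg_neg, one_div])
  rw [hFTC]
  have := inv_pos.2 (hpos b right_mem_uIcc)
  linarith

theorem integral_abs_deriv_div_le {a b c K : ℝ} (hab : a ≤ b) (hc : 0 < c)
    {Φ' Φ'' A A' : ℝ → ℝ}
    (hΦ' : ∀ t ∈ Icc a b, HasDerivAt Φ' (Φ'' t) t) (hΦ'' : ContinuousOn Φ'' (Icc a b))
    (hΦ'_lb : ∀ t ∈ Icc a b, c ≤ |Φ' t|) (hΦ''_nonneg : ∀ t ∈ Icc a b, 0 ≤ Φ'' t)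
    (hA : ∀ t ∈ Icc a b, HasDerivAt A (A' t) t) (hA' : ContinuousOn A' (Icc a b))
    (hA_bd : ∀ t ∈ Icc a b, |A t| ≤ K) :
    ∫ t in a..b, |A' t / Φ' t - A t * (Φ'' t / Φ' t ^ 2)| ≤ (K + ∫ t in a..b, |A' t|) / c := by
  have hne : ∀ t ∈ Icc a b, Φ' t ≠ 0 := fun t ht => abs_pos.1 (hc.trans_le (hΦ'_lb t ht))
  have hq : ContinuousOn (fun t => Φ'' t / Φ' t ^ 2) (Icc a b) :=
    hΦ''.div ((HasDerivAt.continuousOn hΦ').pow 2) fun t ht => pow_ne_zero 2 (hne t ht)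
  have hint : ContinuousOn (fun t => |A' t / Φ' t - A t * (Φ'' t / Φ' t ^ 2)|) (Icc a b) :=
    ((hA'.div (HasDerivAt.continuousOn hΦ') hne).sub ((HasDerivAt.continuousOn hA).mul hq)).abs
  have hA'i : IntervalIntegrable (fun t => |A' t| / c) volume a b :=
    (hA'.abs.div_const c).intervalIntegrable_of_Icc hab
  have hqi : IntervalIntegrable (fun t => K * (Φ'' t / Φ' t ^ 2)) volume a b :=
    (continuousOn_const.mul hq).intervalIntegrable_of_Icc hab
  have hbd : ∀ t ∈ Icc a b, |A' t / Φ' t - A t * (Φ'' t / Φ' t ^ 2)|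
      ≤ |A' t| / c + K * (Φ'' t / Φ' t ^ 2) := fun t ht => by
    have hq : 0 ≤ Φ'' t / Φ' t ^ 2 := div_nonneg (hΦ''_nonneg t ht) (sq_nonneg _)
    calc _ ≤ |A' t / Φ' t| + |A t * (Φ'' t / Φ' t ^ 2)| := abs_sub _ _
      _ = |A' t| / |Φ' t| + |A t| * (Φ'' t / Φ' t ^ 2) := by
          rw [abs_div, abs_mul, abs_of_nonneg hq]
      _ ≤ |A' t| / c + K * (Φ'' t / Φ' t ^ 2) := by
          gcongr
          exacts [hΦ'_lb t ht, hA_bd t ht]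
  calc _ ≤ ∫ t in a..b, (|A' t| / c + K * (Φ'' t / Φ' t ^ 2)) :=
        integral_mono_on hab (hint.intervalIntegrable_of_Icc hab) (hA'i.add hqi) hbd
    _ = (∫ t in a..b, |A' t|) / c + K * ∫ t in a..b, Φ'' t / Φ' t ^ 2 := by
        rw [integral_add hA'i hqi, intervalIntegral.integral_div,
          intervalIntegral.integral_const_mul]
    _ ≤ (∫ t in a..b, |A' t|) / c + K * c⁻¹ := by
        have hK : 0 ≤ K := (abs_nonneg _).trans (hA_bd a (left_mem_Icc.2 hab))
        gcongr
        exact (le_abs_self _).trans (abs_integral_deriv_div_sq_le hab hc hΦ' hΦ'' hΦ'_lb)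
    _ = (K + ∫ t in a..b, |A' t|) / c := by ring

theorem abs_integral_comp_mul_le {a b c K : ℝ} (hab : a ≤ b) (hc : 0 < c)
    {f F Φ Φ' Φ'' A A' : ℝ → ℝ}
    (hF : ∀ x, HasDerivAt F (f x) x) (hF_bd : ∀ x, |F x| ≤ 1) (hf : Continuous f)
    (hΦ : ∀ t ∈ Icc a b, HasDerivAt Φ (Φ' t) t) (hΦ' : ∀ t ∈ Icc a b, HasDerivAt Φ' (Φ'' t) t)
    (hΦ'' : ContinuousOn Φ'' (Icc a b)) (hΦ'_lb : ∀ t ∈ Icc a b, c ≤ |Φ' t|)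
    (hΦ''_nonneg : ∀ t ∈ Icc a b, 0 ≤ Φ'' t)
    (hA : ∀ t ∈ Icc a b, HasDerivAt A (A' t) t) (hA' : ContinuousOn A' (Icc a b))
    (hA_bd : ∀ t ∈ Icc a b, |A t| ≤ K) :
    |∫ t in a..b, f (Φ t) * A t| ≤ (3 * K + ∫ t in a..b, |A' t|) / c := by
  have hne : ∀ t ∈ Icc a b, Φ' t ≠ 0 := fun t ht => abs_pos.1 (hc.trans_le (hΦ'_lb t ht))
  have hΦ'c : ContinuousOn Φ' (Icc a b) := HasDerivAt.continuousOn hΦ'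
  have hu : ∀ t ∈ Icc a b, HasDerivAt (fun t => A t / Φ' t)
      (A' t / Φ' t - A t * (Φ'' t / Φ' t ^ 2)) t := fun t ht =>
    ((hA t ht).div (hΦ' t ht) (hne t ht)).congr_deriv (by field_simp [hne t ht])
  have hu'c : ContinuousOn (fun t => A' t / Φ' t - A t * (Φ'' t / Φ' t ^ 2)) (Icc a b) :=
    (hA'.div hΦ'c hne).sub ((HasDerivAt.continuousOn hA).mul
      (hΦ''.div (hΦ'c.pow 2) fun t ht => pow_ne_zero 2 (hne t ht)))
  have hv : ∀ t ∈ Icc a b, HasDerivAt (F ∘ Φ) (f (Φ t) * Φ' t) t := fun t ht =>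
    (hF (Φ t)).comp t (hΦ t ht)
  have hv'c : ContinuousOn (fun t => f (Φ t) * Φ' t) (Icc a b) :=
    (hf.comp_continuousOn (HasDerivAt.continuousOn hΦ)).mul hΦ'c
  have hu_bd : ∀ t ∈ Icc a b, |A t / Φ' t| ≤ K / c := fun t ht => by
    rw [abs_div]
    exact div_le_div₀ ((abs_nonneg _).trans (hA_bd t ht)) (hA_bd t ht) hc (hΦ'_lb t ht)
  have hcongr : ∫ t in a..b, f (Φ t) * A t = ∫ t in a..b, A t / Φ' t * (f (Φ t) * Φ' t) :=
    integral_congr fun t ht => by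
      rw [uIcc_of_le hab] at ht
      field_simp [hne t ht]
  rw [hcongr]
  calc _ ≤ _ := abs_integral_mul_deriv_le hab hu hv (hu'c.intervalIntegrable_of_Icc hab)
        (hv'c.intervalIntegrable_of_Icc hab) fun t _ => hF_bd (Φ t)
    _ ≤ K / c + K / c + (K + ∫ t in a..b, |A' t|) / c := by
        gcongr
        exacts [hu_bd a (left_mem_Icc.2 hab), hu_bd b (right_mem_Icc.2 hab),
          integral_abs_deriv_div_le hab hc hΦ' hΦ'' hΦ'_lb hΦ''_nonneg hA hA' hA_bd]
    _ = (3 * K + ∫ t in a..b, |A' t|) / c := by ring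

theorem abs_deriv_div_one_add_le {t y y' z Ψ₀ : ℝ} (ht : 0 < 1 + t) (hy : |y| ≤ 1)
    (hy' : |y'| ≤ 1) (hz : |z| ≤ Ψ₀ / (1 + t)) :
    |(y' * z * (1 + t) - y) / (1 + t) ^ 2| ≤ (Ψ₀ + 1) / (1 + t) ^ 2 := by
  rw [abs_div, abs_of_pos (pow_pos ht 2)]
  gcongr
  refine (abs_sub _ _).trans (add_le_add ?_ hy)
  rw [abs_mul, abs_mul, abs_of_pos ht, mul_assoc]
  exact (mul_le_of_le_one_left (by positivity) hy').trans ((le_div_iff₀ ht).1 hz)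

theorem integral_abs_le_div_one_add_of_abs_le {t₀ a b C : ℝ} (ht₀ : 0 < 1 + t₀) (ht₀a : t₀ ≤ a)
    (hab : a ≤ b) {h : ℝ → ℝ} (hh : ContinuousOn h (Icc a b))
    (hh_bd : ∀ t ∈ Icc a b, |h t| ≤ C * ((1 + t) ^ 2)⁻¹) :
    ∫ t in a..b, |h t| ≤ C / (1 + t₀) := by
  have hpos : ∀ t ∈ Icc a b, 0 < (1 + t) ^ 2 := fun t ht => by nlinarith [ht.1]
  have hC : 0 ≤ C := nonneg_of_mul_nonneg_left
    ((abs_nonneg _).trans (hh_bd a (left_mem_Icc.2 hab))) (inv_pos.2 (hpos a (left_mem_Icc.2 hab)))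
  have hweight : ContinuousOn (fun t => ((1 + t) ^ 2)⁻¹) (Icc a b) :=
    ((continuousOn_const.add continuousOn_id).pow 2).inv₀ fun t ht => (hpos t ht).ne'
  calc _ ≤ ∫ t in a..b, C * ((1 + t) ^ 2)⁻¹ :=
        integral_mono_on hab (hh.abs.intervalIntegrable_of_Icc hab)
          ((continuousOn_const.mul hweight).intervalIntegrable_of_Icc hab) hh_bd
    _ = C * ∫ t in a..b, ((1 + t) ^ 2)⁻¹ := intervalIntegral.integral_const_mul _ _
    _ ≤ C * (1 + a)⁻¹ := by gcongr; exact integral_inv_one_add_sq_le (by linarith) hab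
    _ ≤ C / (1 + t₀) := by rw [← div_eq_mul_inv]; gcongr

theorem abs_integral_comp_mul_comp_div_one_add_le {t₀ a b c Ψ₀ : ℝ} (ht₀ : 0 < 1 + t₀)
    (ht₀a : t₀ ≤ a) (hab : a ≤ b) (hc : 0 < c) {f F g g' Φ Φ' Φ'' ψ ψ' : ℝ → ℝ}
    (hF : ∀ x, HasDerivAt F (f x) x) (hF_bd : ∀ x, |F x| ≤ 1) (hf : Continuous f)
    (hg : ∀ x, HasDerivAt g (g' x) x) (hg_bd : ∀ x, |g x| ≤ 1) (hg' : Continuous g')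
    (hg'_bd : ∀ x, |g' x| ≤ 1)
    (hΦ : ∀ t ∈ Icc a b, HasDerivAt Φ (Φ' t) t) (hΦ' : ∀ t ∈ Icc a b, HasDerivAt Φ' (Φ'' t) t)
    (hΦ'' : ContinuousOn Φ'' (Icc a b)) (hΦ'_lb : ∀ t ∈ Icc a b, c ≤ |Φ' t|)
    (hΦ''_nonneg : ∀ t ∈ Icc a b, 0 ≤ Φ'' t)
    (hψ : ∀ t ∈ Icc a b, HasDerivAt ψ (ψ' t) t) (hψ' : ContinuousOn ψ' (Icc a b))
    (hψ'_bd : ∀ t ∈ Icc a b, |ψ' t| ≤ Ψ₀ / (1 + t)) :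
    |∫ s in a..b, f (Φ s) * g (ψ s) / (1 + s)| ≤ (Ψ₀ + 4) / (c * (1 + t₀)) := by
  have hpos : ∀ t ∈ Icc a b, 0 < 1 + t := fun t ht => by linarith [ht.1]
  set A' : ℝ → ℝ := fun t => (g' (ψ t) * ψ' t * (1 + t) - g (ψ t)) / (1 + t) ^ 2
  have hA : ∀ t ∈ Icc a b, HasDerivAt (fun s => g (ψ s) / (1 + s)) (A' t) t := fun t ht =>
    (((hg (ψ t)).comp t (hψ t ht)).div ((hasDerivAt_id' t).const_add 1)
      (hpos t ht).ne').congr_deriv (by rw [mul_one, Function.comp_apply])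
  have hA' : ContinuousOn A' (Icc a b) := by
    have hgc : Continuous g := continuous_iff_continuousAt.2 fun x => (hg x).continuousAt
    have hψc : ContinuousOn ψ (Icc a b) := HasDerivAt.continuousOn hψ
    refine ContinuousOn.div ?_ (by fun_prop) fun t ht => (pow_pos (hpos t ht) 2).ne'
    exact (((hg'.comp_continuousOn hψc).mul hψ').mul (by fun_prop)).sub (hgc.comp_continuousOn hψc)
  have hA_bd : ∀ t ∈ Icc a b, |g (ψ t) / (1 + t)| ≤ (1 + t₀)⁻¹ := fun t ht => by
    rw [abs_div, abs_of_pos (hpos t ht), ← one_div]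
    exact div_le_div₀ zero_le_one (hg_bd _) ht₀ (by linarith [ht.1])
  have hA'_bd : ∀ t ∈ Icc a b, |A' t| ≤ (Ψ₀ + 1) * ((1 + t) ^ 2)⁻¹ := fun t ht =>
    (abs_deriv_div_one_add_le (hpos t ht) (hg_bd _) (hg'_bd _) (hψ'_bd t ht)).trans_eq
      (div_eq_mul_inv _ _)
  simp only [mul_div_assoc]
  calc _ ≤ (3 * (1 + t₀)⁻¹ + ∫ t in a..b, |A' t|) / c :=
        abs_integral_comp_mul_le hab hc hF hF_bd hf hΦ hΦ' hΦ'' hΦ'_lb hΦ''_nonneg hA hA' hA_bd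
    _ ≤ (3 * (1 + t₀)⁻¹ + (Ψ₀ + 1) / (1 + t₀)) / c := by
        gcongr
        exact integral_abs_le_div_one_add_of_abs_le ht₀ ht₀a hab hA' hA'_bd
    _ = (Ψ₀ + 4) / (c * (1 + t₀)) := by field_simp; ring

theorem continuous_and_exists_primitive_abs_le_one {f : ℝ → ℝ}
    (hf : f ∈ ({Real.cos, Real.sin} : Set (ℝ → ℝ))) :
    Continuous f ∧ ∃ F : ℝ → ℝ, (∀ x, HasDerivAt F (f x) x) ∧ ∀ x, |F x| ≤ 1 := by
  rcases hf with rfl | rfl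
  · exact ⟨Real.continuous_cos, Real.sin, Real.hasDerivAt_sin, Real.abs_sin_le_one⟩
  · refine ⟨Real.continuous_sin, fun x => -Real.cos x, fun x => ?_, fun x => ?_⟩
    · exact (Real.hasDerivAt_cos x).neg.congr_deriv (neg_neg _)
    · rw [abs_neg]; exact Real.abs_cos_le_one x

theorem abs_le_one_and_exists_deriv_abs_le_one {g : ℝ → ℝ}
    (hg : g ∈ ({Real.cos, Real.sin} : Set (ℝ → ℝ))) :
    (∀ x, |g x| ≤ 1) ∧ ∃ g' : ℝ → ℝ, (∀ x, HasDerivAt g (g' x) x) ∧ Continuous g' ∧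
      ∀ x, |g' x| ≤ 1 := by
  rcases hg with rfl | rfl
  · refine ⟨Real.abs_cos_le_one, fun x => -Real.sin x, Real.hasDerivAt_cos,
      Real.continuous_sin.neg, fun x => ?_⟩
    rw [abs_neg]; exact Real.abs_sin_le_one x
  · exact ⟨Real.abs_sin_le_one, Real.cos, Real.hasDerivAt_sin, Real.continuous_cos,
      Real.abs_cos_le_one⟩

theorem oscillatory_integral_lemma_general
    (t₀ τm τp φ₀ Ψ₀ : ℝ) (n : ℕ) (hn : 1 ≤ n)
    (ht₀ : 0 ≤ t₀) (hτm : t₀ ≤ τm) (hτ : τm ≤ τp)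
    (φ φ' φ'' ψ ψ' : ℝ → ℝ)
    (hφ₀ : 0 < φ₀)
    (hφd : ∀ t ∈ Icc τm τp, HasDerivAt φ (φ' t) t)
    (hφd' : ∀ t ∈ Icc τm τp, HasDerivAt φ' (φ'' t) t)
    (hφ''cont : ContinuousOn φ'' (Icc τm τp))
    (hψd : ∀ t ∈ Icc τm τp, HasDerivAt ψ (ψ' t) t)
    (hψ'cont : ContinuousOn ψ' (Icc τm τp))
    (hφ'lb : ∀ t ∈ Icc τm τp, φ₀ ≤ |φ' t|)
    (hφ''nonneg : ∀ t ∈ Icc τm τp, 0 ≤ φ'' t)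
    (hψ'bd : ∀ t ∈ Icc τm τp, |ψ' t| ≤ Ψ₀ / (1 + t)) :
    ∀ f ∈ ({Real.cos, Real.sin} : Set (ℝ → ℝ)),
    ∀ g ∈ ({Real.cos, Real.sin} : Set (ℝ → ℝ)),
      |∫ s in τm..τp, f ((n : ℝ) * φ s) * g (ψ s) / (1 + s)|
        ≤ (Ψ₀ + 4) / ((n : ℝ) * φ₀ * (1 + t₀)) := by
  intro f hf g hg
  obtain ⟨hf_cont, F, hF, hF_bd⟩ := continuous_and_exists_primitive_abs_le_one hf
  obtain ⟨hg_bd, g', hg', hg'_cont, hg'_bd⟩ := abs_le_one_and_exists_deriv_abs_le_one hg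
  have hn₀ : (0 : ℝ) < n := Nat.cast_pos.2 hn
  refine abs_integral_comp_mul_comp_div_one_add_le (by linarith) hτm hτ (mul_pos hn₀ hφ₀)
    hF hF_bd hf_cont hg' hg_bd hg'_cont hg'_bd (fun t ht => (hφd t ht).const_mul _)
    (fun t ht => (hφd' t ht).const_mul _) (continuousOn_const.mul hφ''cont) (fun t ht => ?_)
    (fun t ht => mul_nonneg hn₀.le (hφ''nonneg t ht)) hψd hψ'cont hψ'bd
  rw [abs_mul, Nat.abs_cast]
  exact mul_le_mul_of_nonneg_left (hφ'lb t ht) hn₀.le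

/-- Oscillatory integral lemma. -/
theorem oscillatory_integral_lemma
    (t₀ τm τp φ₀ Ψ₀ : ℝ) (n : ℕ) (hn : 1 ≤ n)
    (ht₀ : 0 ≤ t₀) (hτm : t₀ ≤ τm) (hτ : τm ≤ τp)
    (φ φ' φ'' ψ ψ' : ℝ → ℝ)
    (hφ₀ : 0 < φ₀) (hΨ₀ : 0 < Ψ₀)
    (hφd : ∀ t ∈ Icc τm τp, HasDerivAt φ (φ' t) t)
    (hφd' : ∀ t ∈ Icc τm τp, HasDerivAt φ' (φ'' t) t)
    (hφ''cont : ContinuousOn φ'' (Icc τm τp))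
    (hψd : ∀ t ∈ Icc τm τp, HasDerivAt ψ (ψ' t) t)
    (hψ'cont : ContinuousOn ψ' (Icc τm τp))
    (hφ'lb : ∀ t ∈ Icc τm τp, φ₀ ≤ |φ' t|)
    (hφ''nonneg : ∀ t ∈ Icc τm τp, 0 ≤ φ'' t)
    (hψ'bd : ∀ t ∈ Icc τm τp, |ψ' t| ≤ Ψ₀ / (1 + t)) :
    ∀ f ∈ ({Real.cos, Real.sin} : Set (ℝ → ℝ)),
    ∀ g ∈ ({Real.cos, Real.sin} : Set (ℝ → ℝ)),
      |∫ s in τm..τp, f ((n : ℝ) * φ s) * g (ψ s) / (1 + s)|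
        ≤ (Ψ₀ + 4) / ((n : ℝ) * φ₀ * (1 + t₀)) :=
  oscillatory_integral_lemma_general t₀ τm τp φ₀ Ψ₀ n hn ht₀ hτm hτ φ φ' φ'' ψ ψ' hφ₀ hφd hφd'
    hφ''cont hψd hψ'cont hφ'lb hφ''nonneg hψ'bd
end

section
/- (Logarithmic length of the stationary region.) Let η ∈ C²([0,∞)) satisfy η′(t) > 0 and η″(t) > 0 for all t ≥ 0, and assume η′(t) → ∞ as t → ∞. Let n ≥ 1, t₀ ≥ 0, κ, λ > 0, and let τₙ₋ and τₙ₊ be defined as: τₙ₋ := t₀ if η′(t₀) > (2λ−κ)/n, else (η′)^{−1}((2λ−κ)/n); τₙ₊ := t₀ if η′(t₀) > (2λ+κ)/n, else (η′)^{−1}((2λ+κ)/n). Then for any τ₋, τ₊ with τₙ₋ ≤ τ₋ < τ₊ ≤ τₙ₊, one has log((1+τ₊)/(1+τ₋)) ≤ (2κ/n) μ(τ₊), where μ(t) := max_{0≤τ≤t} 1/((1+τ)η″(τ)). -/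
open Set Filter

/-!
On `[τ₋, τ₊]` the function `t ↦ μ(τ₊) η'(t) - log (1 + t)` is nondecreasing, because its derivative
`μ(τ₊) η''(t) - 1/(1+t)` is nonnegative by the definition of `μ`. Hence
`log ((1 + τ₊)/(1 + τ₋)) ≤ μ(τ₊) (η'(τ₊) - η'(τ₋))`, and the definitions of `τₙ₋, τₙ₊` confine
`η'` on `[τₙ₋, τₙ₊]` to an interval of length `2κ/n`.
-/

theorem monotoneOn_of_hasDerivAt_nonneg {D : Set ℝ} (hD : Convex ℝ D) {f f' : ℝ → ℝ}
    (hf : ∀ x ∈ D, HasDerivAt f (f' x) x) (hf'₀ : ∀ x ∈ D, 0 ≤ f' x) : MonotoneOn f D :=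
  monotoneOn_of_hasDerivWithinAt_nonneg hD (fun x hx ↦ (hf x hx).continuousAt.continuousWithinAt)
    (fun x hx ↦ (hf x (interior_subset hx)).hasDerivWithinAt)
    fun x hx ↦ hf'₀ x (interior_subset hx)

theorem log_div_le_mul_sub_of_inv_le {f f' : ℝ → ℝ} {a b M : ℝ} (ha : -1 < a) (hab : a ≤ b)
    (hf : ∀ t ∈ Icc a b, HasDerivAt f (f' t) t) (hM : ∀ t ∈ Icc a b, (1 + t)⁻¹ ≤ M * f' t) :
    Real.log ((1 + b) / (1 + a)) ≤ M * (f b - f a) := by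
  have hpos : ∀ t ∈ Icc a b, 0 < 1 + t := fun t ht ↦ by linarith [ht.1]
  have hg : MonotoneOn (fun t ↦ M * f t - Real.log (1 + t)) (Icc a b) := by
    refine monotoneOn_of_hasDerivAt_nonneg (convex_Icc a b) (f' := fun t ↦ M * f' t - (1 + t)⁻¹)
      (fun t ht ↦ ?_) fun t ht ↦ sub_nonneg.2 (hM t ht)
    have hlog := ((hasDerivAt_id t).const_add 1).log (hpos t ht).ne'
    simpa only [one_div] using ((hf t ht).const_mul M).fun_sub (by simpa using hlog)
  have hgab := hg (left_mem_Icc.2 hab) (right_mem_Icc.2 hab) hab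
  rw [Real.log_div (hpos b (right_mem_Icc.2 hab)).ne' (hpos a (left_mem_Icc.2 hab)).ne']
  simp only at hgab
  linarith

theorem inv_le_mul_of_one_div_mul_le {x y M : ℝ} (hy : 0 < y) (h : 1 / (x * y) ≤ M) :
    x⁻¹ ≤ M * y := by
  calc x⁻¹ = 1 / (x * y) * y := by field_simp
    _ ≤ M * y := mul_le_mul_of_nonneg_right h hy.le

/-- The paper's `τₙ₋` and `τₙ₊` are `thresholdTime η' ηpinv t₀ ((2λ ∓ κ)/n)`. -/
noncomputable def thresholdTime (η' ηpinv : ℝ → ℝ) (t₀ c : ℝ) : ℝ :=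
  if c < η' t₀ then t₀ else ηpinv c

section thresholdTime

variable {η' ηpinv : ℝ → ℝ} {t₀ c : ℝ}

theorem thresholdTime_nonneg_and_le_apply (hmono : MonotoneOn η' (Ici 0)) (ht₀ : 0 ≤ t₀)
    (hinv : ∀ r, η' 0 ≤ r → 0 ≤ ηpinv r ∧ η' (ηpinv r) = r) :
    0 ≤ thresholdTime η' ηpinv t₀ c ∧ c ≤ η' (thresholdTime η' ηpinv t₀ c) := by
  unfold thresholdTime
  split_ifs with h
  · exact ⟨ht₀, h.le⟩
  · obtain ⟨hnonneg, heq⟩ := hinv c ((hmono self_mem_Ici ht₀ ht₀).trans (not_lt.1 h))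
    exact ⟨hnonneg, heq.ge⟩

theorem apply_thresholdTime_of_le (hmono : MonotoneOn η' (Ici 0)) (ht₀ : 0 ≤ t₀)
    (hinv : ∀ r, η' 0 ≤ r → 0 ≤ ηpinv r ∧ η' (ηpinv r) = r) (hc : η' t₀ ≤ c) :
    η' (thresholdTime η' ηpinv t₀ c) = c := by
  rw [thresholdTime, if_neg hc.not_gt]
  exact (hinv c ((hmono self_mem_Ici ht₀ ht₀).trans hc)).2

theorem thresholdTime_eq_of_le_of_lt {d : ℝ} (hcd : c ≤ d) (hd : d < η' t₀) :
    thresholdTime η' ηpinv t₀ c = thresholdTime η' ηpinv t₀ d := by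
  rw [thresholdTime, thresholdTime, if_pos hd, if_pos (hcd.trans_lt hd)]

end thresholdTime

theorem log_length_stationary_region_general
    (η' η'' ηpinv μ : ℝ → ℝ)
    (hηd' : ∀ t, 0 ≤ t → HasDerivAt η' (η'' t) t)
    (hη''pos : ∀ t, 0 ≤ t → 0 < η'' t)
    (hinv₂ : ∀ r, η' 0 ≤ r → 0 ≤ ηpinv r ∧ η' (ηpinv r) = r)
    (hμ : ∀ t, 0 ≤ t → IsGreatest ((fun τ => 1 / ((1 + τ) * η'' τ)) '' Icc 0 t) (μ t))
    (n : ℕ) (t₀ κ lam : ℝ)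
    (ht₀ : 0 ≤ t₀) (hκ : 0 < κ)
    (τnm τnp : ℝ)
    (hτm : τnm = if (2 * lam - κ) / n < η' t₀ then t₀ else ηpinv ((2 * lam - κ) / n))
    (hτp : τnp = if (2 * lam + κ) / n < η' t₀ then t₀ else ηpinv ((2 * lam + κ) / n)) :
    ∀ τm τp : ℝ, τnm ≤ τm → τm < τp → τp ≤ τnp →
      Real.log ((1 + τp) / (1 + τm)) ≤ 2 * κ / n * μ τp := by
  intro τm τp hm hmp hp
  change τnm = thresholdTime η' ηpinv t₀ _ at hτm
  change τnp = thresholdTime η' ηpinv t₀ _ at hτp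
  have hmono : MonotoneOn η' (Ici 0) :=
    monotoneOn_of_hasDerivAt_nonneg (convex_Ici 0) hηd' fun t ht ↦ (hη''pos t ht).le
  obtain ⟨hτnm₀, hlower⟩ :=
    thresholdTime_nonneg_and_le_apply (c := (2 * lam - κ) / n) hmono ht₀ hinv₂
  rw [← hτm] at hτnm₀ hlower
  have hτm₀ : 0 ≤ τm := hτnm₀.trans hm
  have hτp₀ : 0 ≤ τp := hτm₀.trans hmp.le
  have hupper : η' τnp ≤ (2 * lam + κ) / n := by
    rcases lt_or_ge ((2 * lam + κ) / n) (η' t₀) with h | h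
    · -- then `τₙ₋ = τₙ₊ = t₀`, so there is no room for `τm < τp`
      have hcd : (2 * lam - κ) / n ≤ (2 * lam + κ) / n :=
        div_le_div_of_nonneg_right (by linarith) n.cast_nonneg
      linarith [thresholdTime_eq_of_le_of_lt (η' := η') (ηpinv := ηpinv) hcd h]
    · exact hτp ▸ (apply_thresholdTime_of_le hmono ht₀ hinv₂ h).le
  have hspread : η' τp - η' τm ≤ 2 * κ / n := by
    have hwidth : (2 * lam + κ) / n - (2 * lam - κ) / n = 2 * κ / n := by ring
    linarith [hmono hτnm₀ hτm₀ hm, hmono hτp₀ (hτp₀.trans hp) hp]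
  obtain ⟨⟨s, hs, hμs⟩, hμub⟩ := hμ τp hτp₀
  have hμ₀ : 0 ≤ μ τp := by
    rw [← hμs]
    have := hη''pos s hs.1
    have : 0 < 1 + s := by linarith [hs.1]
    positivity
  have hlog := log_div_le_mul_sub_of_inv_le (by linarith) hmp.le
    (fun t ht ↦ hηd' t (hτm₀.trans ht.1))
    fun t ht ↦ inv_le_mul_of_one_div_mul_le (hη''pos t (hτm₀.trans ht.1))
      (hμub ⟨t, ⟨hτm₀.trans ht.1, ht.2⟩, rfl⟩)
  calc Real.log ((1 + τp) / (1 + τm)) ≤ μ τp * (η' τp - η' τm) := hlog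
    _ ≤ μ τp * (2 * κ / n) := mul_le_mul_of_nonneg_left hspread hμ₀
    _ = 2 * κ / n * μ τp := mul_comm _ _

/-- Logarithmic length of the stationary region. -/
theorem log_length_stationary_region
    (η η' η'' ηpinv μ : ℝ → ℝ)
    (hηd : ∀ t, 0 ≤ t → HasDerivAt η (η' t) t)
    (hηd' : ∀ t, 0 ≤ t → HasDerivAt η' (η'' t) t)
    (hη'pos : ∀ t, 0 ≤ t → 0 < η' t)
    (hη''pos : ∀ t, 0 ≤ t → 0 < η'' t)
    (hη'top : Tendsto η' atTop atTop)
    (hinv₁ : ∀ t, 0 ≤ t → ηpinv (η' t) = t)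
    (hinv₂ : ∀ r, η' 0 ≤ r → 0 ≤ ηpinv r ∧ η' (ηpinv r) = r)
    (hμ : ∀ t, 0 ≤ t → IsGreatest ((fun τ => 1 / ((1 + τ) * η'' τ)) '' Icc 0 t) (μ t))
    (n : ℕ) (hn : 1 ≤ n) (t₀ κ lam : ℝ)
    (ht₀ : 0 ≤ t₀) (hκ : 0 < κ) (hlam : 0 < lam)
    (τnm τnp : ℝ)
    (hτm : τnm = if (2 * lam - κ) / n < η' t₀ then t₀ else ηpinv ((2 * lam - κ) / n))
    (hτp : τnp = if (2 * lam + κ) / n < η' t₀ then t₀ else ηpinv ((2 * lam + κ) / n)) :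
    ∀ τm τp : ℝ, τnm ≤ τm → τm < τp → τp ≤ τnp →
      Real.log ((1 + τp) / (1 + τm)) ≤ 2 * κ / n * μ τp :=
  log_length_stationary_region_general η' η'' ηpinv μ hηd' hη''pos hinv₂ hμ n t₀ κ lam ht₀ hκ τnm
    τnp hτm hτp
end

section
/- (Iterated kernel bounds.) Let 0 < m < 1, λ ≥ 0, and let β : [0,∞) → (0,∞) be continuous and satisfy (ω₀/ω(0))(1+t)^{−m} ≤ β(t) ≤ (ω₁/ω(0))(1+t)^{−m} for all t ≥ 0, where 0 < ω₀ ≤ ω₁ and ω(0) > 0 are constants. Define p₁(t) := λ β(t)^{−1}, p₂(t) := λ β(t)^{−1} ∫₀ᵗ β(τ) dτ, and q(t,τ) := −λ² β(t)^{−1} ∫_τ^t β(s) ds. Then for every natural number l ≥ 1 and all t ≥ 0: ∫₀ᵗ |q(t,τ₁)| ∫₀^{τ₁} |q(τ₁,τ₂)| ⋯ ∫₀^{τ_{l−1}} |q(τ_{l−1},τ_l)| |p₁(τ_l)| dτ_l ⋯ dτ₁ ≤ (ω(0)/ω₀) λ (1+t)^m (1/(2l)!) (√(ω₁/ω₀)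 λ t)^{2l}, and ∫₀ᵗ |q(t,τ₁)| ∫₀^{τ₁} |q(τ₁,τ₂)| ⋯ ∫₀^{τ_{l−1}} |q(τ_{l−1},τ_l)| |p₂(τ_l)| dτ_l ⋯ dτ₁ ≤ (ω₁/(ω₀(1−m))) λ (1+t) (1/(2l)!) (√(ω₁/ω₀) λ t)^{2l}. -/
/-!
The two-sided power-law bound makes `β` almost nonincreasing: `β s ≤ (ω₁/ω₀) β τ` for `τ ≤ s`.
Hence, for the weight `w = W / β` with `W ≥ 0` nondecreasing, the kernel satisfies
`|q(t,τ)| w(τ) ≤ ν w(t) (t - τ)` with `ν = (ω₁/ω₀) λ²`. If `|p| ≤ c w`, induction on `l` using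
`∫₀ᵗ (t - τ) τ^{2l} dτ = t^{2l+2} / ((2l+1)(2l+2))` bounds the `l`-fold iterate by
`c w(t) ν^l t^{2l} / (2l)!`. Take `W = 1` for `p₁` and `W = ∫₀^· β` for `p₂`, and bound `1/β(t)`
and `(∫₀ᵗ β) / β(t)` by the power laws.
-/

/-- The `l`-fold iterated Volterra kernel applied to `p`:
`iterKernel q p l t = ∫₀ᵗ |q(t,τ₁)| ∫₀^{τ₁} |q(τ₁,τ₂)| ⋯ ∫₀^{τ_{l-1}} |q(τ_{l-1},τ_l)| |p(τ_l)| dτ_l ⋯ dτ₁`. -/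
noncomputable def iterKernel (q : ℝ → ℝ → ℝ) (p : ℝ → ℝ) : ℕ → ℝ → ℝ
  | 0, t => |p t|
  | l + 1, t => ∫ τ in (0:ℝ)..t, |q t τ| * iterKernel q p l τ

open intervalIntegral Set

theorem intervalIntegral.integral_mono_of_nonneg_on {f g : ℝ → ℝ} {a b : ℝ} (hab : a ≤ b)
    (hf : ∀ x ∈ Icc a b, 0 ≤ f x) (hfg : ∀ x ∈ Icc a b, f x ≤ g x)
    (hg : IntervalIntegrable g MeasureTheory.volume a b) :
    ∫ x in a..b, f x ≤ ∫ x in a..b, g x := by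
  by_cases hfi : IntervalIntegrable f MeasureTheory.volume a b
  · exact integral_mono_on hab hfi hg hfg
  · rw [integral_undef hfi]
    exact integral_nonneg hab fun x hx => (hf x hx).trans (hfg x hx)

theorem integral_sub_mul_pow (t : ℝ) (n : ℕ) :
    ∫ τ in (0:ℝ)..t, (t - τ) * τ ^ n = t ^ (n + 2) / ((n + 1) * (n + 2)) := by
  have hsplit : (fun τ : ℝ => (t - τ) * τ ^ n) = fun τ => t * τ ^ n - τ ^ (n + 1) := by
    funext τ; ring
  have hint : Continuous fun τ : ℝ => t * τ ^ n := by fun_prop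
  rw [hsplit, integral_sub (hint.intervalIntegrable _ _)
    ((continuous_pow (n + 1)).intervalIntegrable _ _), integral_const_mul, integral_pow,
    integral_pow]
  field_simp
  push_cast
  ring

theorem iterKernel_nonneg (q : ℝ → ℝ → ℝ) (p : ℝ → ℝ) (l : ℕ) {t : ℝ} (ht : 0 ≤ t) :
    0 ≤ iterKernel q p l t := by
  induction l generalizing t with
  | zero => exact abs_nonneg _
  | succ l ih =>
    exact integral_nonneg ht fun τ hτ => mul_nonneg (abs_nonneg _) (ih hτ.1)

theorem iterKernel_le {q : ℝ → ℝ → ℝ} {p w : ℝ → ℝ} {c ν : ℝ} (hc : 0 ≤ c) (hν : 0 ≤ ν)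
    (hq : ∀ t τ, 0 ≤ τ → τ ≤ t → |q t τ| * w τ ≤ ν * w t * (t - τ))
    (hp : ∀ τ, 0 ≤ τ → |p τ| ≤ c * w τ) (l : ℕ) {t : ℝ} (ht : 0 ≤ t) :
    iterKernel q p l t ≤ c * w t * (ν ^ l * t ^ (2 * l) / (2 * l).factorial) := by
  induction l generalizing t with
  | zero => simpa [iterKernel] using hp t ht
  | succ l ih =>
    set a : ℝ := c * ν ^ l / (2 * l).factorial with ha_def
    have hstep : ∀ τ ∈ Icc 0 t, |q t τ| * iterKernel q p l τ ≤
        a * ν * w t * ((t - τ) * τ ^ (2 * l)) := fun τ ⟨hτ, hτt⟩ =>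
      calc |q t τ| * iterKernel q p l τ
          ≤ |q t τ| * (c * w τ * (ν ^ l * τ ^ (2 * l) / (2 * l).factorial)) :=
            mul_le_mul_of_nonneg_left (ih hτ) (abs_nonneg _)
        _ = a * τ ^ (2 * l) * (|q t τ| * w τ) := by ring
        _ ≤ a * τ ^ (2 * l) * (ν * w t * (t - τ)) :=
            mul_le_mul_of_nonneg_left (hq t τ hτ hτt) (by positivity)
        _ = a * ν * w t * ((t - τ) * τ ^ (2 * l)) := by ring
    calc iterKernel q p (l + 1) t
        ≤ ∫ τ in (0:ℝ)..t, a * ν * w t * ((t - τ) * τ ^ (2 * l)) :=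
          integral_mono_of_nonneg_on ht
            (fun τ hτ => mul_nonneg (abs_nonneg _) (iterKernel_nonneg q p l hτ.1)) hstep
            (Continuous.intervalIntegrable (by fun_prop) _ _)
      _ = c * w t * (ν ^ (l + 1) * t ^ (2 * (l + 1)) / (2 * (l + 1)).factorial) := by
          rw [integral_const_mul, integral_sub_mul_pow, show 2 * (l + 1) = 2 * l + 1 + 1 by ring,
            Nat.factorial_succ, Nat.factorial_succ, ha_def]
          push_cast
          field_simp
          ring

theorem abs_volterraKernel_mul_le {β W : ℝ → ℝ} {K : ℝ} (hβcont : Continuous β)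
    (hβpos : ∀ t, 0 < β t) (hK : ∀ τ s, 0 ≤ τ → τ ≤ s → β s ≤ K * β τ)
    (hW0 : ∀ τ, 0 ≤ τ → 0 ≤ W τ) (hW : MonotoneOn W (Ici 0)) (lam : ℝ) {t τ : ℝ}
    (hτ : 0 ≤ τ) (hτt : τ ≤ t) :
    |-lam ^ 2 * (β t)⁻¹ * ∫ s in τ..t, β s| * (W τ / β τ) ≤
      K * lam ^ 2 * (W t / β t) * (t - τ) := by
  have hK0 : 0 ≤ K := by nlinarith [hK τ τ hτ le_rfl, hβpos τ]
  have hI0 : 0 ≤ ∫ s in τ..t, β s := integral_nonneg hτt fun s _ => (hβpos s).le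
  have hI : ∫ s in τ..t, β s ≤ K * β τ * (t - τ) := by
    calc ∫ s in τ..t, β s ≤ ∫ _ in τ..t, K * β τ :=
          integral_mono_on hτt (hβcont.intervalIntegrable _ _) intervalIntegrable_const
            fun s hs => hK τ s hτ hs.1
      _ = K * β τ * (t - τ) := by rw [integral_const, smul_eq_mul, mul_comm]
  have hβτ := hβpos τ
  have hβt := hβpos t
  rw [abs_mul, abs_mul, abs_neg, abs_pow, sq_abs, abs_inv, abs_of_pos hβt, abs_of_nonneg hI0]
  calc lam ^ 2 * (β t)⁻¹ * (∫ s in τ..t, β s) * (W τ / β τ)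
      ≤ lam ^ 2 * (β t)⁻¹ * (K * β τ * (t - τ)) * (W τ / β τ) := by
        have := hW0 τ hτ
        gcongr
    _ = K * lam ^ 2 * (W τ / β t) * (t - τ) := by field_simp
    _ ≤ K * lam ^ 2 * (W t / β t) * (t - τ) := by
        have := hW hτ (hτ.trans hτt) hτt
        gcongr

section PowerLaw

variable {β : ℝ → ℝ} {m C : ℝ}

theorem le_mul_of_rpow_bounds {ω₀ ω₁ ωz : ℝ} (hm : 0 ≤ m) (hω₀ : 0 < ω₀) (hω₁ : 0 ≤ ω₁)
    (hωz : 0 < ωz) (hβlb : ∀ t, 0 ≤ t → ω₀ / ωz * (1 + t) ^ (-m) ≤ β t)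
    (hβub : ∀ t, 0 ≤ t → β t ≤ ω₁ / ωz * (1 + t) ^ (-m)) {τ s : ℝ} (hτ : 0 ≤ τ)
    (hτs : τ ≤ s) : β s ≤ ω₁ / ω₀ * β τ :=
  calc β s ≤ ω₁ / ωz * (1 + s) ^ (-m) := hβub s (hτ.trans hτs)
    _ ≤ ω₁ / ωz * (1 + τ) ^ (-m) := by
        have := Real.rpow_le_rpow_of_nonpos (by linarith : (0:ℝ) < 1 + τ)
          (by linarith : 1 + τ ≤ 1 + s) (by linarith : -m ≤ 0)
        gcongr
    _ = ω₁ / ω₀ * (ω₀ / ωz * (1 + τ) ^ (-m)) := by field_simp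
    _ ≤ ω₁ / ω₀ * β τ := by gcongr; exact hβlb τ hτ

theorem inv_le_of_mul_rpow_neg_le {a b t : ℝ} (ha : 0 < a) (ht : 0 ≤ t)
    (h : a * (1 + t) ^ (-m) ≤ b) : b⁻¹ ≤ a⁻¹ * (1 + t) ^ m := by
  have hpos : 0 < a * (1 + t) ^ (-m) := by positivity
  calc b⁻¹ ≤ (a * (1 + t) ^ (-m))⁻¹ := inv_anti₀ hpos h
    _ = a⁻¹ * (1 + t) ^ m := by rw [Real.rpow_neg (by linarith), mul_inv, inv_inv]

theorem integral_le_of_le_rpow (hm : m < 1) (hC : 0 ≤ C) (hβcont : Continuous β)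
    (hβub : ∀ s, 0 ≤ s → β s ≤ C * (1 + s) ^ (-m)) {t : ℝ} (ht : 0 ≤ t) :
    ∫ s in (0:ℝ)..t, β s ≤ C * ((1 + t) ^ (1 - m) / (1 - m)) := by
  have hcont : ContinuousOn (fun s : ℝ => C * (1 + s) ^ (-m)) (uIcc 0 t) := by
    refine continuousOn_const.mul (ContinuousOn.rpow_const (by fun_prop) fun s hs => ?_)
    rw [uIcc_of_le ht] at hs
    exact Or.inl (by linarith [hs.1])
  have hshift : ∫ s in (0:ℝ)..t, (1 + s) ^ (-m) = ∫ x in (1:ℝ)..1 + t, x ^ (-m) := by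
    simpa using integral_comp_add_left (fun x : ℝ => x ^ (-m)) 1 (a := 0) (b := t)
  calc ∫ s in (0:ℝ)..t, β s ≤ ∫ s in (0:ℝ)..t, C * (1 + s) ^ (-m) :=
        integral_mono_on ht (hβcont.intervalIntegrable _ _) hcont.intervalIntegrable
          fun s hs => hβub s hs.1
    _ = C * (((1 + t) ^ (1 - m) - 1) / (1 - m)) := by
        rw [integral_const_mul, hshift, integral_rpow (Or.inl (by linarith)), Real.one_rpow,
          show -m + 1 = 1 - m by ring]
    _ ≤ C * ((1 + t) ^ (1 - m) / (1 - m)) := by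
        have : 0 < 1 - m := by linarith
        gcongr
        linarith

theorem integral_div_le_of_rpow_bounds {ω₀ ω₁ ωz : ℝ} (hm : m < 1) (hω₀ : 0 < ω₀)
    (hω₁ : 0 ≤ ω₁) (hωz : 0 < ωz) (hβcont : Continuous β) (hβpos : ∀ t, 0 < β t)
    (hβlb : ∀ t, 0 ≤ t → ω₀ / ωz * (1 + t) ^ (-m) ≤ β t)
    (hβub : ∀ t, 0 ≤ t → β t ≤ ω₁ / ωz * (1 + t) ^ (-m)) {t : ℝ} (ht : 0 ≤ t) :
    (∫ s in (0:ℝ)..t, β s) / β t ≤ ω₁ / (ω₀ * (1 - m)) * (1 + t) := by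
  have h1m : 0 < 1 - m := by linarith
  have hI0 : 0 ≤ ∫ s in (0:ℝ)..t, β s := integral_nonneg ht fun s _ => (hβpos s).le
  calc (∫ s in (0:ℝ)..t, β s) / β t = (β t)⁻¹ * ∫ s in (0:ℝ)..t, β s := div_eq_inv_mul _ _
    _ ≤ (ω₀ / ωz)⁻¹ * (1 + t) ^ m * (ω₁ / ωz * ((1 + t) ^ (1 - m) / (1 - m))) := by
        gcongr
        · exact inv_le_of_mul_rpow_neg_le (by positivity) ht (hβlb t ht)
        · exact integral_le_of_le_rpow hm (by positivity) hβcont hβub ht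
    _ = ω₁ / (ω₀ * (1 - m)) * ((1 + t) ^ m * (1 + t) ^ (1 - m)) := by field_simp
    _ = ω₁ / (ω₀ * (1 - m)) * (1 + t) := by
        rw [← Real.rpow_add (by linarith), add_sub_cancel, Real.rpow_one]

end PowerLaw

theorem iterKernel_volterraKernel_le {β W p : ℝ → ℝ} {K lam : ℝ} (hβcont : Continuous β)
    (hβpos : ∀ t, 0 < β t) (hK : ∀ τ s, 0 ≤ τ → τ ≤ s → β s ≤ K * β τ)
    (hW0 : ∀ τ, 0 ≤ τ → 0 ≤ W τ) (hW : MonotoneOn W (Ici 0)) (hlam : 0 ≤ lam)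
    (hp : ∀ τ, 0 ≤ τ → |p τ| ≤ lam * (W τ / β τ)) (l : ℕ) {t : ℝ} (ht : 0 ≤ t) :
    iterKernel (fun t' τ => -lam ^ 2 * (β t')⁻¹ * ∫ s in τ..t', β s) p l t ≤
      lam * (W t / β t) * ((K * lam ^ 2) ^ l * t ^ (2 * l) / (2 * l).factorial) := by
  have hK0 : 0 ≤ K := by nlinarith [hK 0 0 le_rfl le_rfl, hβpos 0]
  exact iterKernel_le hlam (by positivity)
    (fun _ _ hτ hτt => abs_volterraKernel_mul_le hβcont hβpos hK hW0 hW lam hτ hτt) hp l ht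

/-- Iterated kernel bounds. -/
theorem iterated_kernel_bounds
    (m lam ω₀ ω₁ ωz : ℝ)
    (hm0 : 0 < m) (hm1 : m < 1) (hlam : 0 ≤ lam)
    (hω₀ : 0 < ω₀) (hω : ω₀ ≤ ω₁) (hωz : 0 < ωz)
    (β : ℝ → ℝ) (hβcont : Continuous β) (hβpos : ∀ t, 0 < β t)
    (hβlb : ∀ t, 0 ≤ t → ω₀ / ωz * (1 + t) ^ (-m) ≤ β t)
    (hβub : ∀ t, 0 ≤ t → β t ≤ ω₁ / ωz * (1 + t) ^ (-m)) :
    ∀ l : ℕ, 1 ≤ l → ∀ t : ℝ, 0 ≤ t →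
      iterKernel (fun t' τ => -lam ^ 2 * (β t')⁻¹ * ∫ s in τ..t', β s)
          (fun τ => lam * (β τ)⁻¹) l t
        ≤ ωz / ω₀ * lam * (1 + t) ^ m *
            (1 / (Nat.factorial (2 * l) : ℝ)) * (Real.sqrt (ω₁ / ω₀) * lam * t) ^ (2 * l) ∧
      iterKernel (fun t' τ => -lam ^ 2 * (β t')⁻¹ * ∫ s in τ..t', β s)
          (fun τ => lam * (β τ)⁻¹ * ∫ s in (0:ℝ)..τ, β s) l t
        ≤ ω₁ / (ω₀ * (1 - m)) * lam * (1 + t) *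
            (1 / (Nat.factorial (2 * l) : ℝ)) * (Real.sqrt (ω₁ / ω₀) * lam * t) ^ (2 * l) := by
  intro l _ t ht
  have hω₁ : 0 ≤ ω₁ := hω₀.le.trans hω
  have hK τ s := le_mul_of_rpow_bounds hm0.le hω₀ hω₁ hωz hβlb hβub (τ := τ) (s := s)
  have hpow : (ω₁ / ω₀ * lam ^ 2) ^ l * t ^ (2 * l) / (2 * l).factorial =
      1 / (2 * l).factorial * (Real.sqrt (ω₁ / ω₀) * lam * t) ^ (2 * l) := by
    simp only [pow_mul, mul_pow, Real.sq_sqrt (div_nonneg hω₁ hω₀.le)]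
    ring
  have hW0 τ (hτ : 0 ≤ τ) : 0 ≤ ∫ s in (0:ℝ)..τ, β s := integral_nonneg hτ fun s _ => (hβpos s).le
  have hW : MonotoneOn (fun τ => ∫ s in (0:ℝ)..τ, β s) (Ici 0) := fun a ha b _ hab =>
    integral_mono_interval le_rfl ha hab (Filter.Eventually.of_forall fun s => (hβpos s).le)
      (hβcont.intervalIntegrable _ _)
  constructor
  · calc _ ≤ lam * (1 / β t) * ((ω₁ / ω₀ * lam ^ 2) ^ l * t ^ (2 * l) / (2 * l).factorial) :=
          iterKernel_volterraKernel_le hβcont hβpos hK (by simp) monotoneOn_const hlam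
            (fun τ _ => by rw [abs_of_nonneg (by have := hβpos τ; positivity), one_div]) l ht
      _ ≤ lam * (ωz / ω₀ * (1 + t) ^ m) *
            ((ω₁ / ω₀ * lam ^ 2) ^ l * t ^ (2 * l) / (2 * l).factorial) := by
          rw [one_div]
          gcongr
          simpa only [inv_div] using inv_le_of_mul_rpow_neg_le (by positivity) ht (hβlb t ht)
      _ = _ := by rw [hpow]; ring
  · calc _ ≤ lam * ((∫ s in (0:ℝ)..t, β s) / β t) *
            ((ω₁ / ω₀ * lam ^ 2) ^ l * t ^ (2 * l) / (2 * l).factorial) :=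
          iterKernel_volterraKernel_le hβcont hβpos hK hW0 hW hlam (fun τ hτ => by
            have := hW0 τ hτ
            have := hβpos τ
            rw [abs_of_nonneg (by positivity), div_eq_inv_mul, mul_assoc]) l ht
      _ ≤ lam * (ω₁ / (ω₀ * (1 - m)) * (1 + t)) *
            ((ω₁ / ω₀ * lam ^ 2) ^ l * t ^ (2 * l) / (2 * l).factorial) := by
          gcongr
          exact integral_div_le_of_rpow_bounds hm1 hω₀ hω₁ hωz hβcont hβpos hβlb hβub ht
      _ = _ := by rw [hpow]; ring
end

section
/- (Growth of the phase under bounded μ.) Let η ∈ C²([0,∞)) satisfy η(0) ≥ 0, η′(t) > 0 and η″(t) > 0 for all t ≥ 0, and suppose μ₁ := sup_{t≥0} μ(t) < ∞, where μ(t) := max_{0≤τ≤t} 1/((1+τ)η″(τ)). Then for all t ≥ 0: η(t)/(1+t) ≥ ((1+t)log(1+t) − t + μ₁(η(0) + η′(0)t))/(μ₁(1+t)), and consequently η(t)/(1+t) → ∞ as t → ∞. -/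
open Set Filter Real

/-!
Taking the supremum in the definition of `μ` gives `(1 + τ) η''(τ) ≥ 1 / μ₁`, i.e. `η''` dominates
the second derivative of `((1 + t) log (1 + t) - t) / μ₁`. Comparing derivatives twice on
`[0, ∞)` yields `η(t) ≥ η(0) + η'(0) t + ((1 + t) log (1 + t) - t) / μ₁`, which is the stated bound;
dividing by `1 + t` leaves at least `(log (1 + t) - 1) / μ₁ → ∞`.
-/

theorem monotoneOn_Ici_of_hasDerivAt_nonneg {f f' : ℝ → ℝ} {a : ℝ}
    (hf : ∀ x, a ≤ x → HasDerivAt f (f' x) x) (hf' : ∀ x, a ≤ x → 0 ≤ f' x) :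
    MonotoneOn f (Ici a) :=
  monotoneOn_of_hasDerivWithinAt_nonneg (convex_Ici a)
    (fun x hx => (hf x hx).continuousAt.continuousWithinAt)
    (fun x hx => (hf x (interior_subset hx : a ≤ x)).hasDerivWithinAt)
    (fun x hx => hf' x (interior_subset hx : a ≤ x))

theorem sub_le_sub_of_hasDerivAt_le {f g f' g' : ℝ → ℝ} {a b : ℝ}
    (hf : ∀ x, a ≤ x → HasDerivAt f (f' x) x) (hg : ∀ x, a ≤ x → HasDerivAt g (g' x) x)
    (hle : ∀ x, a ≤ x → g' x ≤ f' x) (hab : a ≤ b) :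
    g b - g a ≤ f b - f a := by
  have := monotoneOn_Ici_of_hasDerivAt_nonneg (fun x hx => (hf x hx).sub (hg x hx))
    (fun x hx => sub_nonneg.2 (hle x hx)) self_mem_Ici hab hab
  simp only [Pi.sub_apply] at this
  linarith

theorem hasDerivAt_one_add_mul_log_one_add_sub {x : ℝ} (hx : 1 + x ≠ 0) :
    HasDerivAt (fun s => (1 + s) * log (1 + s) - s) (log (1 + x)) x :=
  (((hasDerivAt_mul_log hx).comp_const_add 1 x).sub (hasDerivAt_id' x)).congr_deriv (by ring)

theorem add_mul_log_one_add_le_of_hasDerivAt {f f' : ℝ → ℝ} {κ t : ℝ}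
    (hf : ∀ x, 0 ≤ x → HasDerivAt f (f' x) x) (hf' : ∀ x, 0 ≤ x → κ / (1 + x) ≤ f' x)
    (ht : 0 ≤ t) :
    f 0 + κ * log (1 + t) ≤ f t := by
  have hlog (x : ℝ) (hx : 0 ≤ x) : HasDerivAt (fun s => κ * log (1 + s)) (κ / (1 + x)) x := by
    simpa [div_eq_mul_inv] using
      (((hasDerivAt_id x).const_add 1).log (by positivity)).const_mul κ
  have := sub_le_sub_of_hasDerivAt_le hf hlog hf' ht
  simp only [add_zero, log_one, mul_zero, sub_zero] at this
  linarith

theorem add_mul_add_mul_log_one_add_le_of_hasDerivAt {f f' f'' : ℝ → ℝ} {κ t : ℝ}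
    (hf : ∀ x, 0 ≤ x → HasDerivAt f (f' x) x) (hf' : ∀ x, 0 ≤ x → HasDerivAt f' (f'' x) x)
    (hf'' : ∀ x, 0 ≤ x → κ / (1 + x) ≤ f'' x) (ht : 0 ≤ t) :
    f 0 + f' 0 * t + κ * ((1 + t) * log (1 + t) - t) ≤ f t := by
  have hg (x : ℝ) (hx : 0 ≤ x) : HasDerivAt (fun s => f' 0 * s + κ * ((1 + s) * log (1 + s) - s))
      (f' 0 + κ * log (1 + x)) x :=
    (((hasDerivAt_id' x).const_mul (f' 0)).add
      ((hasDerivAt_one_add_mul_log_one_add_sub (by positivity)).const_mul κ)).congr_deriv (by ring)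
  have := sub_le_sub_of_hasDerivAt_le hf hg
    (fun x hx => add_mul_log_one_add_le_of_hasDerivAt hf' hf'' hx) ht
  simp only [add_zero, log_one, mul_zero, sub_zero] at this
  linarith

theorem inv_div_le_of_one_div_mul_le {a b M : ℝ} (ha : 0 < a) (hb : 0 < b)
    (h : 1 / (a * b) ≤ M) : M⁻¹ / a ≤ b := by
  rw [one_div] at h
  rw [div_le_iff₀ ha, mul_comm]
  exact (inv_le_comm₀ (by positivity) ((by positivity : 0 < (a * b)⁻¹).trans_le h)).1 h

theorem tendsto_div_one_add_atTop_of_mul_log_le {f : ℝ → ℝ} {κ : ℝ} (hκ : 0 < κ)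
    (hf : ∀ t, 0 ≤ t → κ * ((1 + t) * log (1 + t) - t) ≤ f t) :
    Tendsto (fun t => f t / (1 + t)) atTop atTop := by
  have hlog : Tendsto (fun t => κ * (log (1 + t) - 1)) atTop atTop := by
    refine Tendsto.const_mul_atTop hκ ?_
    simpa [sub_eq_add_neg] using tendsto_atTop_add_const_right _ (-1)
      (tendsto_log_atTop.comp (tendsto_atTop_add_const_left atTop 1 tendsto_id))
  refine tendsto_atTop_mono' atTop ?_ hlog
  filter_upwards [eventually_ge_atTop 0] with t ht
  rw [le_div_iff₀ (by positivity)]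
  calc κ * (log (1 + t) - 1) * (1 + t) = κ * ((1 + t) * log (1 + t) - t) - κ := by ring
    _ ≤ f t := by linarith [hf t ht]

/-- Growth of the phase under bounded μ. -/
theorem phase_growth_under_bounded_mu
    (η η' η'' μ : ℝ → ℝ) (μ₁ : ℝ)
    (hη0 : 0 ≤ η 0)
    (hηd : ∀ t, 0 ≤ t → HasDerivAt η (η' t) t)
    (hηd' : ∀ t, 0 ≤ t → HasDerivAt η' (η'' t) t)
    (hη'pos : ∀ t, 0 ≤ t → 0 < η' t)
    (hη''pos : ∀ t, 0 ≤ t → 0 < η'' t)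
    (hμ : ∀ t, 0 ≤ t → IsGreatest ((fun τ => 1 / ((1 + τ) * η'' τ)) '' Icc 0 t) (μ t))
    (hμ₁ : IsLUB (μ '' Ici 0) μ₁) :
    (∀ t, 0 ≤ t →
      ((1 + t) * Real.log (1 + t) - t + μ₁ * (η 0 + η' 0 * t)) / (μ₁ * (1 + t))
        ≤ η t / (1 + t)) ∧
    Tendsto (fun t => η t / (1 + t)) atTop atTop := by
  have hbound (τ : ℝ) (hτ : 0 ≤ τ) : 1 / ((1 + τ) * η'' τ) ≤ μ₁ :=
    ((hμ τ hτ).2 ⟨τ, ⟨hτ, le_rfl⟩, rfl⟩).trans (hμ₁.1 ⟨τ, hτ, rfl⟩)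
  have hμ₁pos : 0 < μ₁ := by
    have := hη''pos 0 le_rfl
    exact (by positivity : 0 < 1 / ((1 + 0) * η'' 0)).trans_le (hbound 0 le_rfl)
  have hη (t : ℝ) (ht : 0 ≤ t) :
      η 0 + η' 0 * t + μ₁⁻¹ * ((1 + t) * log (1 + t) - t) ≤ η t :=
    add_mul_add_mul_log_one_add_le_of_hasDerivAt hηd hηd'
      (fun τ hτ => inv_div_le_of_one_div_mul_le (by positivity) (hη''pos τ hτ) (hbound τ hτ)) ht
  refine ⟨fun t ht => ?_, tendsto_div_one_add_atTop_of_mul_log_le (inv_pos.2 hμ₁pos) ?_⟩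
  · calc ((1 + t) * log (1 + t) - t + μ₁ * (η 0 + η' 0 * t)) / (μ₁ * (1 + t))
        = (η 0 + η' 0 * t + μ₁⁻¹ * ((1 + t) * log (1 + t) - t)) / (1 + t) := by
          field_simp; ring
      _ ≤ η t / (1 + t) := by gcongr; exact hη t ht
  · intro t ht
    linarith [hη t ht, mul_nonneg (hη'pos 0 le_rfl).le ht]
end

section
/- (Exact energy decay for the critical weak dissipation m = 2, frequency form.) Let λ ≥ 0 and let v : [0,∞) → ℝ be a C² solution of v″(t) + λ²v(t) + (2/(1+t)) v′(t) = 0 with v(0) = v₀ and v′(0) = v₁. Then for all t ≥ 0: λ²v(t)² + (v′(t) + v(t)/(1+t))² = (1+t)^{−2} (λ²v₀² + (v₁ + v₀)²). Equivalently, the function w(t) := (1+t)v(t) satisfies w″ + λ²w = 0 and its energy λ²w(t)² + w′(t)² is conserved. -/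
/-- Exact energy decay for the critical weak dissipation m = 2, frequency form. -/
theorem critical_weak_dissipation_exact_decay
    (lam v₀ v₁ : ℝ) (hlam : 0 ≤ lam)
    (v v' v'' : ℝ → ℝ)
    (hv : ∀ t, 0 ≤ t → HasDerivAt v (v' t) t)
    (hv' : ∀ t, 0 ≤ t → HasDerivAt v' (v'' t) t)
    (hode : ∀ t, 0 ≤ t → v'' t + lam ^ 2 * v t + (2 / (1 + t)) * v' t = 0)
    (h0 : v 0 = v₀) (h1 : v' 0 = v₁) :
    ∀ t, 0 ≤ t →
      lam ^ 2 * v t ^ 2 + (v' t + v t / (1 + t)) ^ 2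
        = (lam ^ 2 * v₀ ^ 2 + (v₁ + v₀) ^ 2) / (1 + t) ^ 2 ∧
      lam ^ 2 * ((1 + t) * v t) ^ 2 + ((1 + t) * v' t + v t) ^ 2
        = lam ^ 2 * v₀ ^ 2 + (v₁ + v₀) ^ 2 := by
  set E : ℝ → ℝ := fun s => lam ^ 2 * ((1 + s) * v s) ^ 2 + ((1 + s) * v' s + v s) ^ 2
    with hE_def
  have hE : ∀ s, 0 ≤ s → HasDerivAt E 0 s := by
    intro s hs
    have hs1 : (1 : ℝ) + s ≠ 0 := by positivity
    have hw : HasDerivAt (fun s => (1 + s) * v s) (1 * v s + (1 + s) * v' s) s :=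
      ((hasDerivAt_id s).const_add 1).mul (hv s hs)
    have hw' : HasDerivAt (fun s => (1 + s) * v' s + v s)
        (1 * v' s + (1 + s) * v'' s + v' s) s :=
      (((hasDerivAt_id s).const_add 1).mul (hv' s hs)).add (hv s hs)
    have hd : HasDerivAt E
        (lam ^ 2 * (2 * ((1 + s) * v s) ^ 1 * (1 * v s + (1 + s) * v' s)) +
          2 * ((1 + s) * v' s + v s) ^ 1 * (1 * v' s + (1 + s) * v'' s + v' s)) s :=
      ((hw.pow 2).const_mul (lam ^ 2)).add (hw'.pow 2)
    have key : (1 + s) * v'' s + 2 * v' s + lam ^ 2 * (1 + s) * v s = 0 := by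
      have h := hode s hs
      field_simp at h
      linarith
    have hzero : (lam ^ 2 * (2 * ((1 + s) * v s) ^ 1 * (1 * v s + (1 + s) * v' s)) +
        2 * ((1 + s) * v' s + v s) ^ 1 * (1 * v' s + (1 + s) * v'' s + v' s)) = 0 := by
      linear_combination (2 * ((1 + s) * v' s + v s)) * key
    rwa [hzero] at hd
  have hconst : ∀ t, 0 ≤ t → E t = E 0 := by
    intro t ht
    have := constant_of_has_deriv_right_zero (f := E) (a := 0) (b := t)
      (fun x hx => (hE x hx.1).continuousAt.continuousWithinAt)
      (fun x hx => (hE x hx.1).hasDerivWithinAt)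
    exact this t ⟨ht, le_refl t⟩
  intro t ht
  have hs1 : (1 : ℝ) + t ≠ 0 := by positivity
  have hEt : E t = lam ^ 2 * v₀ ^ 2 + (v₁ + v₀) ^ 2 := by
    rw [hconst t ht]
    simp only [hE_def, h0, h1]
    ring
  constructor
  · have : lam ^ 2 * v t ^ 2 + (v' t + v t / (1 + t)) ^ 2 = E t / (1 + t) ^ 2 := by
      simp only [hE_def]
      field_simp
    rw [this, hEt]
  · exact hEt
end
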